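/- arXiv:2507.10012 — 6 statements merged into one kernel-verified Lean document; each statement's English description precedes it below -/
import Mathlib

section
/- Let R₀ > 0, N ∈ ℕ, let x₁, …, x_N be pairwise distinct points of the open ball B(0,R₀) ⊂ ℝ³, and let λ₁, …, λ_N ∈ ℝ. If Σ_{k=1}^{N} λ_k φ(x_k) = 0 for every function φ : ℝ³ → ℝ that is twice continuously differentiable and harmonic on B(0,R₀), then λ₁ = λ₂ = ⋯ = λ_N = 0. -/
open MeasureTheory Metric

/-- The Laplacian on `ℝ³`: sum of the second directional derivatives in the three
coordinate directions. -/
noncomputable def lap {F : Type*} [NormedAddCommGroup F] [NormedSpace ℝ F]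
    (f : EuclideanSpace ℝ (Fin 3) → F) (x : EuclideanSpace ℝ (Fin 3)) : F :=
  ∑ i : Fin 3, fderiv ℝ (fun y => fderiv ℝ f y (EuclideanSpace.single i 1)) x
    (EuclideanSpace.single i 1)

/-- The complex-valued linear form `y ↦ ∑ aᵢ yᵢ` on `ℝ³`. -/
noncomputable def Lmap (a : Fin 3 → ℂ) : EuclideanSpace ℝ (Fin 3) →L[ℝ] ℂ :=
  ∑ i, a i • ((Complex.ofRealCLM : ℝ →L[ℝ] ℂ).comp (EuclideanSpace.proj i))

lemma Lmap_apply (a : Fin 3 → ℂ) (y : EuclideanSpace ℝ (Fin 3)) :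
    Lmap a y = ∑ i, a i * (y i : ℂ) := by
  simp [Lmap, mul_comm]

lemma Lmap_single (a : Fin 3 → ℂ) (i : Fin 3) :
    Lmap a (EuclideanSpace.single i 1) = a i := by
  simp only [Lmap_apply, EuclideanSpace.single_apply]
  rw [Finset.sum_eq_single i] <;> simp +contextual

lemma hasFDerivAt_comp_Lmap {g : ℂ → ℂ} {g' : ℂ} (a : Fin 3 → ℂ)
    (y : EuclideanSpace ℝ (Fin 3)) (hg : HasDerivAt g g' (Lmap a y)) :
    HasFDerivAt (fun y => g (Lmap a y))
      (((ContinuousLinearMap.smulRight (1 : ℂ →L[ℂ] ℂ) g').restrictScalars ℝ).comp (Lmap a)) y :=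
  (hg.hasFDerivAt.restrictScalars ℝ).comp y (Lmap a).hasFDerivAt

lemma lap_T_pow (T : ℂ →L[ℝ] ℝ) (a : Fin 3 → ℂ) (ha : ∑ i, (a i) ^ 2 = 0) (m : ℕ)
    (x : EuclideanSpace ℝ (Fin 3)) :
    lap (fun y => T ((Lmap a y) ^ m)) x = 0 := by
  have h1 : ∀ y, HasFDerivAt (fun y => T ((Lmap a y) ^ m))
      (T.comp (((ContinuousLinearMap.smulRight (1 : ℂ →L[ℂ] ℂ)
        ((m : ℂ) * (Lmap a y) ^ (m - 1))).restrictScalars ℝ).comp (Lmap a))) y := fun y =>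
    T.hasFDerivAt.comp y (hasFDerivAt_comp_Lmap a y (hasDerivAt_pow m (Lmap a y)))
  have hfd : ∀ i : Fin 3,
      (fun y => fderiv ℝ (fun y => T ((Lmap a y) ^ m)) y (EuclideanSpace.single i 1))
      = fun y => T ((Lmap a y) ^ (m - 1) * ((m : ℂ) * a i)) := by
    intro i; funext y
    rw [(h1 y).fderiv]
    simp [Lmap_single]
    congr 1
    ring
  have h2 : ∀ (i : Fin 3) (z : EuclideanSpace ℝ (Fin 3)),
      HasFDerivAt (fun y => T ((Lmap a y) ^ (m - 1) * ((m : ℂ) * a i)))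
      (T.comp (((ContinuousLinearMap.smulRight (1 : ℂ →L[ℂ] ℂ)
        (((m - 1 : ℕ) : ℂ) * (Lmap a z) ^ (m - 1 - 1) * ((m : ℂ) * a i))).restrictScalars ℝ).comp
        (Lmap a))) z := fun i z =>
    T.hasFDerivAt.comp z
      (hasFDerivAt_comp_Lmap a z ((hasDerivAt_pow (m - 1) (Lmap a z)).mul_const _))
  unfold lap
  simp only [hfd]
  have h3 : ∀ i : Fin 3,
      fderiv ℝ (fun y => T ((Lmap a y) ^ (m - 1) * ((m : ℂ) * a i))) x
        (EuclideanSpace.single i 1)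
      = T (((m : ℂ) * ((m - 1 : ℕ) : ℂ) * (Lmap a x) ^ (m - 1 - 1)) * (a i * a i)) := by
    intro i
    rw [(h2 i x).fderiv]
    simp [Lmap_single]
    congr 1
    ring
  rw [Finset.sum_congr rfl fun i _ => h3 i, ← map_sum, ← Finset.mul_sum]
  have : ∑ i : Fin 3, a i * a i = 0 := by simpa [sq] using ha
  rw [this, mul_zero, map_zero]

lemma contDiff_T_pow (T : ℂ →L[ℝ] ℝ) (a : Fin 3 → ℂ) (m : ℕ) :
    ContDiff ℝ 2 (fun y : EuclideanSpace ℝ (Fin 3) => T ((Lmap a y) ^ m)) :=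
  T.contDiff.comp ((((contDiff_id (𝕜 := ℂ)).pow m).restrict_scalars ℝ).comp (Lmap a).contDiff)

open Polynomial in
/-- The quadratic whose value at `t` is `Lmap (A t) v`. -/
noncomputable def Pquad (v : EuclideanSpace ℝ (Fin 3)) : Polynomial ℂ :=
  C (-(v 0 : ℂ) + (v 1 : ℂ) * Complex.I) * X ^ 2 + C (2 * (v 2 : ℂ)) * X
    + C ((v 0 : ℂ) + (v 1 : ℂ) * Complex.I)

noncomputable def Avec (t : ℝ) : Fin 3 → ℂ :=
  ![1 - (t : ℂ) ^ 2, (1 + (t : ℂ) ^ 2) * Complex.I, 2 * (t : ℂ)]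

lemma Avec_sq (t : ℝ) : ∑ i, (Avec t i) ^ 2 = 0 := by
  simp [Avec, Fin.sum_univ_three, mul_pow, Complex.I_sq]
  ring

lemma Pquad_eval (v : EuclideanSpace ℝ (Fin 3)) (t : ℝ) :
    (Pquad v).eval (t : ℂ) = Lmap (Avec t) v := by
  simp [Pquad, Lmap_apply, Avec, Fin.sum_univ_three]
  ring

lemma Pquad_ne_zero (v : EuclideanSpace ℝ (Fin 3)) (hv : v ≠ 0) : Pquad v ≠ 0 := by
  intro hP
  apply hv
  have c2 : (Pquad v).coeff 2 = -(v 0 : ℂ) + (v 1 : ℂ) * Complex.I := by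
    simp only [Pquad, Polynomial.coeff_add, Polynomial.coeff_C_mul, Polynomial.coeff_X_pow,
      Polynomial.coeff_C, Polynomial.coeff_X]
    norm_num
  have c1 : (Pquad v).coeff 1 = 2 * (v 2 : ℂ) := by
    simp only [Pquad, Polynomial.coeff_add, Polynomial.coeff_C_mul, Polynomial.coeff_X_pow,
      Polynomial.coeff_C, Polynomial.coeff_X]
    norm_num
  have c0 : (Pquad v).coeff 0 = (v 0 : ℂ) + (v 1 : ℂ) * Complex.I := by
    simp only [Pquad, Polynomial.coeff_add, Polynomial.coeff_C_mul, Polynomial.coeff_X_pow,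
      Polynomial.coeff_C, Polynomial.coeff_X]
    norm_num
  rw [hP] at c2 c1 c0
  simp only [Polynomial.coeff_zero] at c2 c1 c0
  have h0 : v 0 = 0 ∧ v 1 = 0 := by
    have := congrArg Complex.re c0.symm
    have := congrArg Complex.im c0.symm
    constructor <;> [simpa using congrArg Complex.re c0.symm;
      simpa using congrArg Complex.im c0.symm]
  have h2 : v 2 = 0 := by
    have := congrArg Complex.re c1.symm
    simpa using this
  ext i
  fin_cases i
  · exact h0.1
  · exact h0.2
  · exact h2

/-- If `x₁, …, x_N` are pairwise distinct points of `B(0,R₀) ⊂ ℝ³` and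
`λ₁, …, λ_N ∈ ℝ` satisfy `Σ λ_k φ(x_k) = 0` for every `φ` that is `C²` and harmonic on
`B(0,R₀)`, then all `λ_k` vanish. -/
theorem point_masses_vanish_of_orthogonal_to_harmonic
    (R₀ : ℝ) (hR₀ : 0 < R₀) (N : ℕ)
    (x : Fin N → EuclideanSpace ℝ (Fin 3)) (lam : Fin N → ℝ)
    (hx : ∀ k, x k ∈ ball (0 : EuclideanSpace ℝ (Fin 3)) R₀)
    (hinj : Function.Injective x)
    (h : ∀ φ : EuclideanSpace ℝ (Fin 3) → ℝ,
        ContDiffOn ℝ 2 φ (ball (0 : EuclideanSpace ℝ (Fin 3)) R₀) →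
        (∀ y ∈ ball (0 : EuclideanSpace ℝ (Fin 3)) R₀, lap φ y = 0) →
        ∑ k, lam k * φ (x k) = 0) :
    ∀ k, lam k = 0 := by
  -- choose `t` so that the linear forms separate the points
  have hSfin : ∀ k l : Fin N,
      {t : ℝ | k ≠ l ∧ (Pquad (x k - x l)).eval (t : ℂ) = 0}.Finite := by
    intro k l
    by_cases hkl : k = l
    · simp [hkl]
    · have hv : x k - x l ≠ 0 := sub_ne_zero.2 fun e => hkl (hinj e)
      have hroots : {z : ℂ | (Pquad (x k - x l)).IsRoot z}.Finite :=
        Polynomial.finite_setOf_isRoot (Pquad_ne_zero _ hv)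
      refine (hroots.preimage (Complex.ofReal_injective.injOn)).subset ?_
      intro t ht
      exact ht.2
  obtain ⟨t, ht⟩ :=
    (Set.finite_iUnion (fun k => Set.finite_iUnion (fun l => hSfin k l))
      : (⋃ k, ⋃ l, {t : ℝ | k ≠ l ∧ (Pquad (x k - x l)).eval (t : ℂ) = 0}).Finite
      ).infinite_compl.nonempty
  set a : Fin 3 → ℂ := Avec t with ha_def
  set ζ : Fin N → ℂ := fun k => Lmap a (x k) with hζ_def
  have hζinj : Function.Injective ζ := by
    intro k l hkl
    by_contra hne
    apply ht
    refine Set.mem_iUnion.2 ⟨k, Set.mem_iUnion.2 ⟨l, ⟨hne, ?_⟩⟩⟩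
    rw [Pquad_eval, map_sub]
    simpa [hζ_def] using sub_eq_zero.2 hkl
  -- moments vanish
  have hmom : ∀ m : ℕ, ∑ k, (ζ k) ^ m * (lam k : ℂ) = 0 := by
    intro m
    have hre := h (fun y => Complex.reCLM ((Lmap a y) ^ m))
      ((contDiff_T_pow _ a m).contDiffOn)
      (fun y _ => lap_T_pow _ a (Avec_sq t) m y)
    have him := h (fun y => Complex.imCLM ((Lmap a y) ^ m))
      ((contDiff_T_pow _ a m).contDiffOn)
      (fun y _ => lap_T_pow _ a (Avec_sq t) m y)
    simp only [Complex.reCLM_apply] at hre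
    simp only [Complex.imCLM_apply] at him
    apply Complex.ext
    · simpa [Complex.ext_iff, Complex.mul_re, mul_comm] using hre
    · simpa [Complex.ext_iff, Complex.mul_im, mul_comm] using him
  have hμ : (fun k => (lam k : ℂ)) = 0 := by
    have hdet : ((Matrix.vandermonde ζ).transpose).det ≠ 0 := by
      rw [Matrix.det_transpose]
      exact Matrix.det_vandermonde_ne_zero_iff.mpr hζinj
    apply Matrix.eq_zero_of_mulVec_eq_zero hdet
    funext m
    simpa [Matrix.mulVec, dotProduct, Matrix.vandermonde] using hmom m
  intro k
  simpa using congrFun hμ k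
end

section
/- Let R₀ > 0. For j = 1,2 let N_j ∈ ℕ, let x₁^j, …, x_{N_j}^j be pairwise distinct points of the open ball B(0,R₀) ⊂ ℝ³, and let λ₁^j, …, λ_{N_j}^j ∈ ℝ ∖ {0}. If Σ_{k=1}^{N₁} λ_k¹ φ(x_k¹) = Σ_{k=1}^{N₂} λ_k² φ(x_k²) for every function φ : ℝ³ → ℝ that is twice continuously differentiable and harmonic on B(0,R₀), then N₁ = N₂ and there exists a bijection σ of {1, …, N₁} such that x_k¹ = x_{σ(k)}² and λ_k¹ = λ_{σ(k)}² for all k = 1, …, N₁. -/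
open MeasureTheory Metric

open scoped RealInnerProductSpace

local notation "E3" => EuclideanSpace ℝ (Fin 3)

lemma lap_pow (L : E3 →L[ℝ] ℂ)
    (hL : ∑ i : Fin 3, (L (EuclideanSpace.single i 1))^2 = 0)
    (T : ℂ →L[ℝ] ℝ) (m : ℕ) (x : E3) :
    lap (fun y => T ((L y)^m)) x = 0 := by
  have hf : ∀ y : E3, HasFDerivAt (fun z : E3 => (L z)^m)
      ((((m:ℂ) * (L y)^(m-1))) • (L : E3 →L[ℝ] ℂ)) y := fun y =>
    (hasDerivAt_pow m (L y)).comp_hasFDerivAt y L.hasFDerivAt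
  have hφ : ∀ y : E3, HasFDerivAt (fun z : E3 => T ((L z)^m))
      (T.comp ((((m:ℂ) * (L y)^(m-1))) • L)) y := fun y =>
    (T.hasFDerivAt.comp y (hf y))
  have hfd : ∀ (i : Fin 3) (y : E3),
      fderiv ℝ (fun z : E3 => T ((L z)^m)) y (EuclideanSpace.single i 1)
        = T (((m:ℂ) * (L (EuclideanSpace.single i 1))) * (L y)^(m-1)) := by
    intro i y
    rw [(hφ y).fderiv]
    simp [mul_comm, mul_assoc, mul_left_comm]
  -- second derivative
  have hg : ∀ (c : ℂ) (y : E3), HasFDerivAt (fun z : E3 => T (c * (L z)^(m-1)))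
      (T.comp (c • ((((m-1:ℕ):ℂ) * (L y)^(m-1-1))) • L)) y := by
    intro c y
    exact T.hasFDerivAt.comp y
      (((hasDerivAt_pow (m-1) (L y)).comp_hasFDerivAt y L.hasFDerivAt).const_mul c)
  have key : ∀ i : Fin 3,
      fderiv ℝ (fun y : E3 => fderiv ℝ (fun z : E3 => T ((L z)^m)) y (EuclideanSpace.single i 1))
        x (EuclideanSpace.single i 1)
      = T (((m:ℂ) * ((m-1:ℕ):ℂ) * (L x)^(m-1-1)) * (L (EuclideanSpace.single i 1))^2) := by
    intro i
    have : (fun y : E3 => fderiv ℝ (fun z : E3 => T ((L z)^m)) y (EuclideanSpace.single i 1))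
        = fun y : E3 => T (((m:ℂ) * (L (EuclideanSpace.single i 1))) * (L y)^(m-1)) :=
      funext fun y => hfd i y
    rw [this, (hg _ x).fderiv]
    simp
    ring_nf
  unfold lap
  simp only [key]
  rw [← map_sum, ← Finset.mul_sum]
  rw [hL]
  simp

lemma contDiff_pow_comp (L : E3 →L[ℝ] ℂ) (T : ℂ →L[ℝ] ℝ) (m : ℕ) :
    ContDiff ℝ 2 (fun y => T ((L y)^m)) :=
  T.contDiff.comp (L.contDiff.pow m)


lemma exists_avoid {ι : Type*} [Finite ι] (d : ι → E3) :
    ∃ n : E3, n ≠ 0 ∧ ∀ i, n ∉ Submodule.span ℝ {d i} := by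
  classical
  by_contra hcon
  push_neg at hcon
  set p : Option ι → Subspace ℝ E3 := fun o => o.elim ⊥ (fun i => Submodule.span ℝ {d i}) with hp
  have hcover : ⋃ o, (p o : Set E3) = Set.univ := by
    ext n
    simp only [Set.mem_iUnion, Set.mem_univ, iff_true]
    rcases eq_or_ne n 0 with rfl | hn0
    · exact ⟨none, by simp [hp]⟩
    · obtain ⟨i, hi⟩ := hcon n hn0
      exact ⟨some i, hi⟩
  haveI := Fintype.ofFinite ι
  haveI : Finite (Option ι) := inferInstance
  obtain ⟨o, ho⟩ := Subspace.exists_eq_top_of_iUnion_eq_univ hcover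
  have h3 : Module.finrank ℝ E3 = 3 := finrank_euclideanSpace_fin
  cases o with
  | none =>
      simp only [hp, Option.elim] at ho
      have : Module.finrank ℝ (⊥ : Submodule ℝ E3) = 0 := finrank_bot ℝ E3
      rw [ho, finrank_top, h3] at this
      omega
  | some i =>
      simp only [hp, Option.elim] at ho
      have h1 : Module.finrank ℝ (Submodule.span ℝ {d i}) ≤ 1 := by
        have := finrank_span_le_card (R := ℝ) ({d i} : Set E3)
        simpa using this
      rw [ho, finrank_top, h3] at h1
      omega

lemma exists_null_inj (P : Finset E3) :
    ∃ L : E3 →L[ℝ] ℂ, (∑ i : Fin 3, (L (EuclideanSpace.single i 1))^2 = 0) ∧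
      Set.InjOn L (P : Set E3) := by
  classical
  obtain ⟨n, hn0, hn⟩ := exists_avoid (ι := ↥P × ↥P)
    (fun q => (q.1 : E3) - (q.2 : E3))
  set K := (ℝ ∙ n)ᗮ with hK
  have hfr : Module.finrank ℝ K = 2 := by
    have h1 := Submodule.finrank_add_finrank_orthogonal (𝕜 := ℝ) (E := E3) (ℝ ∙ n)
    rw [finrank_span_singleton hn0, finrank_euclideanSpace_fin] at h1
    rw [← hK] at h1
    omega
  let B : OrthonormalBasis (Fin 2) ℝ K := (stdOrthonormalBasis ℝ K).reindex (finCongr hfr)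
  have hij : ∀ i j : Fin 2, ⟪(B i : E3), (B j : E3)⟫ = if i = j then 1 else 0 := by
    intro i j
    rw [← Submodule.coe_inner]
    exact orthonormal_iff_ite.mp B.orthonormal i j
  set a : E3 := (B 0 : E3) with ha
  set b : E3 := (B 1 : E3) with hb
  have haa : ⟪a, a⟫ = 1 := by simpa using hij 0 0
  have hbb : ⟪b, b⟫ = 1 := by simpa using hij 1 1
  have hab : ⟪a, b⟫ = 0 := by simpa using hij 0 1
  set L : E3 →L[ℝ] ℂ := Complex.ofRealCLM.comp ((innerSL ℝ) a) +
      Complex.I • (Complex.ofRealCLM.comp ((innerSL ℝ) b)) with hLdef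
  have hLx : ∀ x : E3, L x = (⟪a, x⟫ : ℂ) + Complex.I * (⟪b, x⟫ : ℂ) := by
    intro x
    simp [hLdef]
  have hPi : ∀ x y : E3, ⟪x, y⟫ = ∑ i, x i * y i := by
    intro x y
    simp [PiLp.inner_apply, RCLike.inner_apply, conj_trivial]
    exact Finset.sum_congr rfl fun i _ => mul_comm _ _
  refine ⟨L, ?_, ?_⟩
  · have hsingle : ∀ (w : E3) (i : Fin 3), ⟪w, EuclideanSpace.single i 1⟫ = w i := by
      intro w i
      rw [hPi]
      simp [EuclideanSpace.single_apply, Finset.sum_ite_eq]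
    have expand : ∀ i : Fin 3, (L (EuclideanSpace.single i 1))^2
        = (((a i)^2 - (b i)^2 : ℝ) : ℂ) + Complex.I * ((2 * (a i * b i) : ℝ) : ℂ) := by
      intro i
      rw [hLx, hsingle, hsingle]
      have : Complex.I^2 = -1 := Complex.I_sq
      push_cast
      ring_nf
      rw [this]
      ring
    rw [Finset.sum_congr rfl (fun i _ => expand i)]
    rw [Finset.sum_add_distrib, ← Finset.mul_sum, ← Complex.ofReal_sum, ← Complex.ofReal_sum]
    have e1 : ∑ i : Fin 3, ((a i)^2 - (b i)^2) = 0 := by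
      have h1 : ∑ i : Fin 3, (a i)^2 = 1 := by
        rw [← haa, hPi]; exact Finset.sum_congr rfl (fun i _ => sq (a i))
      have h2 : ∑ i : Fin 3, (b i)^2 = 1 := by
        rw [← hbb, hPi]; exact Finset.sum_congr rfl (fun i _ => sq (b i))
      rw [Finset.sum_sub_distrib, h1, h2, sub_self]
    have e2 : ∑ i : Fin 3, (2 * (a i * b i)) = 0 := by
      rw [← Finset.mul_sum, ← hPi, hab, mul_zero]
    rw [e1, e2]
    simp
  · intro u hu v hv huv
    by_contra hne
    have hd0 : u - v ≠ 0 := sub_ne_zero.mpr hne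
    have hre : ⟪a, u⟫ = ⟪a, v⟫ ∧ ⟪b, u⟫ = ⟪b, v⟫ := by
      have h1 := congrArg Complex.re huv
      have h2 := congrArg Complex.im huv
      rw [hLx, hLx] at h1 h2
      simp at h1 h2
      exact ⟨h1, h2⟩
    have hda : ⟪a, u - v⟫ = 0 := by rw [inner_sub_right, hre.1, sub_self]
    have hdb : ⟪b, u - v⟫ = 0 := by rw [inner_sub_right, hre.2, sub_self]
    have hdK : u - v ∈ Kᗮ := by
      rw [Submodule.mem_orthogonal]
      intro w hw
      have hrepr := B.sum_repr ⟨w, hw⟩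
      have : w = ∑ i : Fin 2, B.repr ⟨w, hw⟩ i • (B i : E3) := by
        have := congrArg (Subtype.val) hrepr
        simp at this
        rw [Fin.sum_univ_two]
        exact this.symm
      rw [this, sum_inner, Fin.sum_univ_two, real_inner_smul_left, real_inner_smul_left]
      have z0 : ⟪(B 0 : E3), u - v⟫ = 0 := by rw [show ((B 0 : K) : E3) = a from rfl, real_inner_comm]; rw [← hda, real_inner_comm]
      have z1 : ⟪(B 1 : E3), u - v⟫ = 0 := by rw [show ((B 1 : K) : E3) = b from rfl, real_inner_comm]; rw [← hdb, real_inner_comm]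
      rw [z0, z1]
      ring
    have hdn : u - v ∈ ℝ ∙ n := by
      rw [hK, Submodule.orthogonal_orthogonal] at hdK
      exact hdK
    obtain ⟨t, ht⟩ := Submodule.mem_span_singleton.mp hdn
    have ht0 : t ≠ 0 := by
      rintro rfl
      rw [zero_smul] at ht
      exact hd0 ht.symm
    have : n ∈ Submodule.span ℝ {u - v} := by
      rw [Submodule.mem_span_singleton]
      exact ⟨t⁻¹, by rw [← ht, smul_smul, inv_mul_cancel₀ ht0, one_smul]⟩
    exact hn (⟨u, hu⟩, ⟨v, hv⟩) this

/-- Two finite combinations of point masses at pairwise distinct points of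
`B(0,R₀)` with nonzero weights which agree when tested against every function `C²` and
harmonic on `B(0,R₀)` must coincide up to a bijection of the index sets. -/
theorem point_masses_unique_of_equal_harmonic_moments
    (R₀ : ℝ) (hR₀ : 0 < R₀) (N₁ N₂ : ℕ)
    (x₁ : Fin N₁ → EuclideanSpace ℝ (Fin 3)) (x₂ : Fin N₂ → EuclideanSpace ℝ (Fin 3))
    (l₁ : Fin N₁ → ℝ) (l₂ : Fin N₂ → ℝ)
    (hx₁ : ∀ k, x₁ k ∈ ball (0 : EuclideanSpace ℝ (Fin 3)) R₀)
    (hx₂ : ∀ k, x₂ k ∈ ball (0 : EuclideanSpace ℝ (Fin 3)) R₀)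
    (hinj₁ : Function.Injective x₁) (hinj₂ : Function.Injective x₂)
    (hl₁ : ∀ k, l₁ k ≠ 0) (hl₂ : ∀ k, l₂ k ≠ 0)
    (h : ∀ φ : EuclideanSpace ℝ (Fin 3) → ℝ,
        ContDiffOn ℝ 2 φ (ball (0 : EuclideanSpace ℝ (Fin 3)) R₀) →
        (∀ y ∈ ball (0 : EuclideanSpace ℝ (Fin 3)) R₀, lap φ y = 0) →
        ∑ k, l₁ k * φ (x₁ k) = ∑ k, l₂ k * φ (x₂ k)) :
    N₁ = N₂ ∧ ∃ σ : Fin N₁ ≃ Fin N₂, ∀ k, x₁ k = x₂ (σ k) ∧ l₁ k = l₂ (σ k) := by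
  classical
  set P : Finset (EuclideanSpace ℝ (Fin 3)) :=
    (Finset.image x₁ Finset.univ) ∪ (Finset.image x₂ Finset.univ) with hP
  obtain ⟨L, hLnull, hLinj⟩ := exists_null_inj P
  -- moments
  have hmom : ∀ m : ℕ,
      ∑ k, (l₁ k : ℂ) * (L (x₁ k))^m = ∑ k, (l₂ k : ℂ) * (L (x₂ k))^m := by
    intro m
    have hre := h (fun y => Complex.reCLM ((L y)^m))
      ((contDiff_pow_comp L Complex.reCLM m).contDiffOn)
      (fun y _ => lap_pow L hLnull Complex.reCLM m y)
    have him := h (fun y => Complex.imCLM ((L y)^m))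
      ((contDiff_pow_comp L Complex.imCLM m).contDiffOn)
      (fun y _ => lap_pow L hLnull Complex.imCLM m y)
    apply Complex.ext
    · simpa [Complex.mul_re] using hre
    · simpa [Complex.mul_im] using him
  -- polynomial version
  have hpoly : ∀ p : Polynomial ℂ,
      ∑ k, (l₁ k : ℂ) * p.eval (L (x₁ k)) = ∑ k, (l₂ k : ℂ) * p.eval (L (x₂ k)) := by
    intro p
    induction p using Polynomial.induction_on' with
    | add p q hp hq =>
        simp only [Polynomial.eval_add, mul_add, Finset.sum_add_distrib, hp, hq]
    | monomial n c =>
        simp only [Polynomial.eval_monomial]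
        calc ∑ k, (l₁ k : ℂ) * (c * (L (x₁ k))^n)
            = c * ∑ k, (l₁ k : ℂ) * (L (x₁ k))^n := by
              rw [Finset.mul_sum]; exact Finset.sum_congr rfl fun k _ => by ring
          _ = c * ∑ k, (l₂ k : ℂ) * (L (x₂ k))^n := by rw [hmom n]
          _ = ∑ k, (l₂ k : ℂ) * (c * (L (x₂ k))^n) := by
              rw [Finset.mul_sum]; exact Finset.sum_congr rfl fun k _ => by ring
  -- pointwise weights agree
  have hkey : ∀ w ∈ P,
      (∑ k, if x₁ k = w then (l₁ k : ℂ) else 0)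
        = ∑ k, if x₂ k = w then (l₂ k : ℂ) else 0 := by
    intro w hw
    have hwT : L w ∈ P.image (⇑L) := Finset.mem_image_of_mem _ hw
    have hInj : Set.InjOn (id : ℂ → ℂ) (P.image (⇑L) : Set ℂ) := Function.injective_id.injOn
    have := hpoly (Lagrange.basis (P.image (⇑L)) id (L w))
    have heval : ∀ u ∈ P, (Lagrange.basis (P.image (⇑L)) id (L w)).eval (L u)
        = if u = w then 1 else 0 := by
      intro u hu
      by_cases huw : u = w
      · subst huw
        simp only [if_pos rfl]
        have := Lagrange.eval_basis_self hInj hwT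
        simpa using this
      · have hne : L w ≠ L u := fun hc =>
          huw ((hLinj hu hw hc.symm))
        have huT : L u ∈ P.image (⇑L) := Finset.mem_image_of_mem _ hu
        have := Lagrange.eval_basis_of_ne (v := (id : ℂ → ℂ)) (s := P.image (⇑L)) hne huT
        simp only [id] at this
        simp [huw, this]
    have e1 : ∑ k, (l₁ k : ℂ) * (Lagrange.basis (P.image (⇑L)) id (L w)).eval (L (x₁ k))
        = ∑ k, (if x₁ k = w then (l₁ k : ℂ) else 0) :=
      Finset.sum_congr rfl fun k _ => by
        rw [heval (x₁ k) (by simp [hP])]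
        by_cases hc : x₁ k = w <;> simp [hc]
    have e2 : ∑ k, (l₂ k : ℂ) * (Lagrange.basis (P.image (⇑L)) id (L w)).eval (L (x₂ k))
        = ∑ k, (if x₂ k = w then (l₂ k : ℂ) else 0) :=
      Finset.sum_congr rfl fun k _ => by
        rw [heval (x₂ k) (by simp [hP])]
        by_cases hc : x₂ k = w <;> simp [hc]
    rw [e1, e2] at this
    exact this
  -- from weights to the bijection
  have hmem₁ : ∀ k, x₁ k ∈ P := fun k => by simp [hP]
  have hmem₂ : ∀ k, x₂ k ∈ P := fun k => by simp [hP]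
  have hσ : ∀ k : Fin N₁, ∃ j : Fin N₂, x₂ j = x₁ k ∧ l₂ j = l₁ k := by
    intro k
    have hk := hkey (x₁ k) (hmem₁ k)
    have hL : (∑ k', if x₁ k' = x₁ k then (l₁ k' : ℂ) else 0) = (l₁ k : ℂ) := by
      simp [hinj₁.eq_iff]
    rw [hL] at hk
    have hex : ∃ j, x₂ j = x₁ k := by
      by_contra hc
      push_neg at hc
      rw [Finset.sum_eq_zero (fun j _ => if_neg (hc j))] at hk
      exact hl₁ k (by exact_mod_cast hk)
    obtain ⟨j, hj⟩ := hex
    refine ⟨j, hj, ?_⟩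
    rw [← hj] at hk
    have hR : (∑ j', if x₂ j' = x₂ j then (l₂ j' : ℂ) else 0) = (l₂ j : ℂ) := by
      simp [hinj₂.eq_iff]
    rw [hR] at hk
    exact_mod_cast hk.symm
  have hτ : ∀ j : Fin N₂, ∃ k : Fin N₁, x₁ k = x₂ j ∧ l₁ k = l₂ j := by
    intro j
    have hk := hkey (x₂ j) (hmem₂ j)
    have hR : (∑ j', if x₂ j' = x₂ j then (l₂ j' : ℂ) else 0) = (l₂ j : ℂ) := by
      simp [hinj₂.eq_iff]
    rw [hR] at hk
    have hex : ∃ k, x₁ k = x₂ j := by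
      by_contra hc
      push_neg at hc
      rw [Finset.sum_eq_zero (fun k _ => if_neg (hc k))] at hk
      exact hl₂ j (by exact_mod_cast hk.symm)
    obtain ⟨k, hkk⟩ := hex
    refine ⟨k, hkk, ?_⟩
    rw [← hkk] at hk
    have hL : (∑ k', if x₁ k' = x₁ k then (l₁ k' : ℂ) else 0) = (l₁ k : ℂ) := by
      simp [hinj₁.eq_iff]
    rw [hL] at hk
    exact_mod_cast hk
  choose σ hσx hσl using hσ
  choose τ hτx hτl using hτ
  have hlinv : Function.LeftInverse τ σ := by
    intro k
    apply hinj₁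
    rw [hτx (σ k), hσx k]
  have hrinv : Function.RightInverse τ σ := by
    intro j
    apply hinj₂
    rw [hσx (τ j), hτx j]
  let e : Fin N₁ ≃ Fin N₂ := ⟨σ, τ, hlinv, hrinv⟩
  refine ⟨by simpa using Fintype.card_congr e, e, fun k => ⟨(hσx k).symm, (hσl k).symm⟩⟩
end

section
/- Let R₀ > 0 and b₀ > 0. For j = 1,2 let N_j ∈ ℕ, let b_k^j > 0 with b_k^j ≠ b₀, radii r_k^j > 0 and centers x_k^j ∈ ℝ³ (k = 1,…,N_j) be such that the balls B(x_k^j, r_k^j), k = 1,…,N_j, are pairwise disjoint with closures contained in B(0,R₀), and set c_j := b₀ + Σ_{k=1}^{N_j} (b_k^j − b₀) 1_{B(x_k^j, r_k^j)}. Assume: (i) for every k = 1, …, min(N₁,N₂), either b_k¹ = b_k² or r_k¹ = r_k²; and (ii) there exists a partial order ≼ on ℝ³ such that x_k^j ≼ x_{k+1}^j for j = 1,2 and 1 ≤ k ≤ N_j − 1. If ∫_{B(0,R₀)} (c₁(x)^{−2} − c₂(x)^{−2}) φ(x) dx = 0 for every function φ : ℝ³ → ℝ that is twice continuously differentiable and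 harmonic on B(0,R₀), then N₁ = N₂ and x_k¹ = x_k², b_k¹ = b_k², r_k¹ = r_k² for all k = 1,…,N₁; in particular c₁ = c₂. -/
open MeasureTheory Metric

namespace SpeedDet
noncomputable section
abbrev E3 := EuclideanSpace ℝ (Fin 3)

/-! ### The complexified linear test map and its powers -/

def Wmap (a b : E3) : E3 →L[ℝ] ℂ :=
  Complex.ofRealCLM.comp (innerSL ℝ a) + Complex.I • Complex.ofRealCLM.comp (innerSL ℝ b)

lemma Wmap_apply (a b y : E3) : Wmap a b y = (inner ℝ a y : ℝ) + (inner ℝ b y : ℝ) * Complex.I := by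
  simp [Wmap]; ring

lemma pow_hasFDerivAt (W : E3 →L[ℝ] ℂ) (n : ℕ) (x : E3) :
    HasFDerivAt (fun y => (W y) ^ n) ((((n : ℂ) * (W x) ^ (n - 1))) • (W : E3 →L[ℝ] ℂ)) x := by
  have hg : HasDerivAt (fun z : ℂ => z ^ n) ((n : ℂ) * (W x) ^ (n - 1)) (W x) :=
    hasDerivAt_pow n (W x)
  have := (hg.hasFDerivAt.restrictScalars ℝ).comp x (W.hasFDerivAt (x := x))
  refine this.congr_fderiv ?_
  ext y
  simp [mul_comm]

lemma Tpow_hasFDerivAt (T : ℂ →L[ℝ] ℝ) (W : E3 →L[ℝ] ℂ) (c : ℂ) (n : ℕ) (x : E3) :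
    HasFDerivAt (fun y => T (c * (W y) ^ n))
      (T.comp (((c * ((n : ℂ) * (W x) ^ (n - 1)))) • (W : E3 →L[ℝ] ℂ))) x := by
  have h1 : HasFDerivAt (fun y => c * (W y) ^ n)
      ((c * ((n : ℂ) * (W x) ^ (n - 1))) • (W : E3 →L[ℝ] ℂ)) x := by
    have := (pow_hasFDerivAt W n x).const_mul c
    refine this.congr_fderiv ?_
    ext y; simp [mul_assoc]
  exact T.hasFDerivAt.comp x h1

lemma lap_Tpow (T : ℂ →L[ℝ] ℝ) (W : E3 →L[ℝ] ℂ)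
    (hQ : ∑ i : Fin 3, (W (EuclideanSpace.single i 1)) ^ 2 = 0) (n : ℕ) (x : E3) :
    lap (fun y => T ((W y) ^ n)) x = 0 := by
  have hfun : (fun y : E3 => T ((W y) ^ n)) = fun y => T (1 * (W y) ^ n) := by
    funext y; rw [one_mul]
  have hd1 : ∀ (y : E3) (e : E3),
      fderiv ℝ (fun y => T ((W y) ^ n)) y e = T (((n : ℂ) * W e) * (W y) ^ (n - 1)) := by
    intro y e
    rw [hfun, (Tpow_hasFDerivAt T W 1 n y).fderiv]
    simp; ring_nf
  have hd2 : ∀ (e : E3) (y : E3),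
      HasFDerivAt (fun z => fderiv ℝ (fun y => T ((W y) ^ n)) z e)
        (T.comp (((((n : ℂ) * W e) * (((n-1 : ℕ) : ℂ) * (W y) ^ (n - 1 - 1)))) • W)) y := by
    intro e y
    have : (fun z => fderiv ℝ (fun y => T ((W y) ^ n)) z e)
        = fun z => T (((n : ℂ) * W e) * (W z) ^ (n - 1)) := by
      funext z; rw [hd1]
    rw [this]
    exact Tpow_hasFDerivAt T W ((n : ℂ) * W e) (n - 1) y
  unfold lap
  have : ∀ i : Fin 3,
      fderiv ℝ (fun z => fderiv ℝ (fun y => T ((W y) ^ n)) z (EuclideanSpace.single i 1)) x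
        (EuclideanSpace.single i 1)
      = T ((((n : ℂ) * ((n-1 : ℕ) : ℂ) * (W x) ^ (n - 1 - 1)))
          * (W (EuclideanSpace.single i 1)) ^ 2) := by
    intro i
    rw [(hd2 (EuclideanSpace.single i 1) x).fderiv]
    simp only [ContinuousLinearMap.coe_comp', Function.comp_apply,
      ContinuousLinearMap.smul_apply, smul_eq_mul]
    congr 1; ring
  simp only [this]
  rw [← map_sum, ← Finset.mul_sum, hQ, mul_zero, map_zero]

/-! ### Rotations in the `(a,b)`-plane and vanishing moments over balls -/

def rotFun (a b : E3) (c s : ℝ) (y : E3) : E3 :=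
  y + ((c-1) * (inner ℝ a y : ℝ) - s * (inner ℝ b y : ℝ)) • a
    + (s * (inner ℝ a y : ℝ) + (c-1) * (inner ℝ b y : ℝ)) • b

lemma rotFun_linear (a b : E3) (c s : ℝ) : IsLinearMap ℝ (rotFun a b c s) := by
  constructor
  · intro y z
    simp only [rotFun, inner_add_right]
    module
  · intro t y
    simp only [rotFun, inner_smul_right, real_inner_smul_right]
    module

lemma rotFun_norm {a b : E3} (ha : (inner ℝ a a : ℝ) = 1) (hb : (inner ℝ b b : ℝ) = 1)
    (hab : (inner ℝ a b : ℝ) = 0) (c s : ℝ) (hcs : c^2 + s^2 = 1) (y : E3) :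
    ‖rotFun a b c s y‖ = ‖y‖ := by
  have key : (inner ℝ (rotFun a b c s y) (rotFun a b c s y) : ℝ) = (inner ℝ y y : ℝ) := by
    have hba : (inner ℝ b a : ℝ) = 0 := by rw [real_inner_comm]; exact hab
    have hya : (inner ℝ y a : ℝ) = (inner ℝ a y : ℝ) := real_inner_comm _ _
    have hyb : (inner ℝ y b : ℝ) = (inner ℝ b y : ℝ) := real_inner_comm _ _
    simp only [rotFun, inner_add_left, inner_add_right, real_inner_smul_left,
      real_inner_smul_right, ha, hb, hab, hba, hya, hyb]
    linear_combination ((inner ℝ a y : ℝ)^2 + (inner ℝ b y : ℝ)^2) * hcs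
  have h2 : ‖rotFun a b c s y‖ * ‖rotFun a b c s y‖ = ‖y‖ * ‖y‖ := by
    rw [← real_inner_self_eq_norm_mul_norm, key, real_inner_self_eq_norm_mul_norm]
  exact (mul_self_inj (norm_nonneg _) (norm_nonneg _)).mp h2

def rotE (a b : E3) (c s : ℝ) (hcs : c^2+s^2 = 1)
    (ha : (inner ℝ a a : ℝ) = 1) (hb : (inner ℝ b b : ℝ) = 1) (hab : (inner ℝ a b : ℝ) = 0) :
    E3 ≃ₗᵢ[ℝ] E3 :=
  LinearIsometry.toLinearIsometryEquiv
    ⟨IsLinearMap.mk' _ (rotFun_linear a b c s), rotFun_norm ha hb hab c s hcs⟩ rfl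

lemma Wmap_rotE {a b : E3} (ha : (inner ℝ a a : ℝ) = 1) (hb : (inner ℝ b b : ℝ) = 1)
    (hab : (inner ℝ a b : ℝ) = 0) (c s : ℝ) (hcs : c^2+s^2 = 1) (y : E3) :
    Wmap a b (rotE a b c s hcs ha hb hab y) = ((c : ℂ) + s * Complex.I) * Wmap a b y := by
  have hba : (inner ℝ b a : ℝ) = 0 := by rw [real_inner_comm]; exact hab
  have h1 : rotE a b c s hcs ha hb hab y = rotFun a b c s y := rfl
  rw [h1, Wmap_apply, Wmap_apply]
  have e1 : (inner ℝ a (rotFun a b c s y) : ℝ)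
      = c * (inner ℝ a y : ℝ) - s * (inner ℝ b y : ℝ) := by
    simp only [rotFun, inner_add_right, real_inner_smul_right, ha, hab]
    ring
  have e2 : (inner ℝ b (rotFun a b c s y) : ℝ)
      = s * (inner ℝ a y : ℝ) + c * (inner ℝ b y : ℝ) := by
    simp only [rotFun, inner_add_right, real_inner_smul_right, hb, hba]
    ring
  rw [e1, e2]
  apply Complex.ext <;> simp <;> ring

lemma integrableOn_pow (W : E3 →L[ℝ] ℂ) (c : ℂ) (m : ℕ) (p : E3) (r : ℝ) :
    IntegrableOn (fun y => c * (W y) ^ m) (ball p r) volume := by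
  have hc : Continuous fun y : E3 => c * (W y) ^ m := continuous_const.mul (W.continuous.pow m)
  exact (hc.locallyIntegrable.integrableOn_isCompact (isCompact_closedBall p r)).mono_set
    ball_subset_closedBall

lemma integral_pow_ball_zero {a b : E3} (ha : (inner ℝ a a : ℝ) = 1) (hb : (inner ℝ b b : ℝ) = 1)
    (hab : (inner ℝ a b : ℝ) = 0) (m : ℕ) (hm : m ≠ 0) (r : ℝ) :
    ∫ y in ball (0 : E3) r, (Wmap a b y) ^ m = 0 := by
  set θ : ℝ := Real.pi / m with hθ
  have hcs : (Real.cos θ)^2 + (Real.sin θ)^2 = 1 := by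
    have := Real.sin_sq_add_cos_sq θ; linarith
  set ρ := rotE a b (Real.cos θ) (Real.sin θ) hcs ha hb hab with hρ
  have hpre : ⇑ρ ⁻¹' (ball (0 : E3) r) = ball (0 : E3) r := by
    ext z
    simp [mem_ball, dist_eq_norm]
  have key : ∫ y in ball (0 : E3) r, (Wmap a b (ρ y)) ^ m
      = ∫ y in ball (0 : E3) r, (Wmap a b y) ^ m := by
    conv_lhs => rw [← hpre]
    exact ρ.measurePreserving.setIntegral_preimage_emb
      ρ.toHomeomorph.measurableEmbedding (fun y => (Wmap a b y) ^ m) _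
  have hrot : ∀ y, (Wmap a b (ρ y)) ^ m = (-1 : ℂ) * (Wmap a b y) ^ m := by
    intro y
    rw [hρ, Wmap_rotE ha hb hab _ _ hcs y, mul_pow]
    congr 1
    have h1 : ((Real.cos θ : ℂ) + (Real.sin θ : ℂ) * Complex.I) = Complex.exp (θ * Complex.I) := by
      rw [Complex.exp_mul_I]
      simp
    rw [h1, ← Complex.exp_nat_mul]
    have h2 : (m : ℂ) * (θ * Complex.I) = (Real.pi : ℂ) * Complex.I := by
      have hmθ : (m : ℝ) * θ = Real.pi := by
        rw [hθ]; field_simp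
      push_cast [← hmθ]
      ring
    rw [h2, Complex.exp_pi_mul_I]
  simp only [hrot] at key
  rw [integral_const_mul] at key
  have : (2 : ℂ) * ∫ y in ball (0 : E3) r, (Wmap a b y) ^ m = 0 := by
    linear_combination -key
  simpa using this

lemma integral_pow_ball {a b : E3} (ha : (inner ℝ a a : ℝ) = 1) (hb : (inner ℝ b b : ℝ) = 1)
    (hab : (inner ℝ a b : ℝ) = 0) (n : ℕ) (p : E3) (r : ℝ) :
    ∫ y in ball p r, (Wmap a b y) ^ n
      = (volume (ball p r)).toReal • (Wmap a b p) ^ n := by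
  have htrans : ∫ y in ball p r, (Wmap a b y) ^ n
      = ∫ y in ball (0 : E3) r, (Wmap a b (p + y)) ^ n := by
    have hmp : MeasurePreserving (fun y : E3 => p + y) volume volume :=
      measurePreserving_add_left volume p
    have hemb : MeasurableEmbedding (fun y : E3 => p + y) :=
      (Homeomorph.addLeft p).measurableEmbedding
    have hpre : (fun y : E3 => p + y) ⁻¹' (ball p r) = ball (0 : E3) r := by
      ext z
      simp [mem_ball, dist_eq_norm, add_comm]
    rw [← hmp.setIntegral_preimage_emb hemb (fun y => (Wmap a b y) ^ n) (ball p r), hpre]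
  rw [htrans]
  have hexp : ∀ y : E3, (Wmap a b (p + y)) ^ n
      = ∑ k ∈ Finset.range (n+1), (Wmap a b p) ^ k * (Wmap a b y) ^ (n - k) * (n.choose k : ℂ) := by
    intro y
    rw [map_add, add_pow]
  simp only [hexp]
  rw [integral_finset_sum]
  · have hsingle : ∀ k ∈ Finset.range (n+1), k ≠ n →
        (∫ y in ball (0 : E3) r, (Wmap a b p) ^ k * (Wmap a b y) ^ (n - k) * (n.choose k : ℂ)) = 0 := by
      intro k hk hkn
      have hnk : n - k ≠ 0 := by
        simp only [Finset.mem_range] at hk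
        omega
      have : ∀ y : E3, (Wmap a b p) ^ k * (Wmap a b y) ^ (n - k) * (n.choose k : ℂ)
          = ((Wmap a b p) ^ k * (n.choose k : ℂ)) * (Wmap a b y) ^ (n - k) := by
        intro y; ring
      simp only [this]
      rw [integral_const_mul, integral_pow_ball_zero ha hb hab _ hnk r, mul_zero]
    rw [Finset.sum_eq_single n hsingle (by simp)]
    simp only [Nat.sub_self, pow_zero, mul_one, Nat.choose_self, Nat.cast_one]
    rw [setIntegral_const]
    have : volume (ball p r) = volume (ball (0 : E3) r) := by
      simp [Measure.addHaar_ball_center]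
    rw [this]; rfl
  · intro k hk
    have : ∀ y : E3, (Wmap a b p) ^ k * (Wmap a b y) ^ (n - k) * (n.choose k : ℂ)
        = ((Wmap a b p) ^ k * (n.choose k : ℂ)) * (Wmap a b y) ^ (n - k) := by
      intro y; ring
    simp only [this]
    exact integrableOn_pow _ _ _ _ _

/-! ### A generic orthonormal pair separating a finite set of points -/

def gam (t : ℝ) : E3 := (WithLp.equiv 2 (Fin 3 → ℝ)).symm ![1, t, t^2]

lemma gam_apply (t : ℝ) (i : Fin 3) : gam t i = ![1, t, t^2] i := rfl

lemma gam_ne_zero (t : ℝ) : gam t ≠ 0 := by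
  intro h
  have : gam t 0 = 0 := by rw [h]; rfl
  rw [gam_apply] at this
  simp at this

lemma gam_not_parallel {t t' : ℝ} (htt : t ≠ t') (d : E3) (hd : d ≠ 0)
    (h1 : gam t ∈ (Submodule.span ℝ {d} : Submodule ℝ E3))
    (h2 : gam t' ∈ (Submodule.span ℝ {d} : Submodule ℝ E3)) : False := by
  rw [Submodule.mem_span_singleton] at h1 h2
  obtain ⟨μ, hμ⟩ := h1
  obtain ⟨ν, hν⟩ := h2
  have hμ0 : μ ≠ 0 := by
    rintro rfl
    exact gam_ne_zero t (by rw [← hμ, zero_smul])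
  have hd' : d = μ⁻¹ • gam t := by rw [← hμ, smul_smul, inv_mul_cancel₀ hμ0, one_smul]
  rw [hd', smul_smul] at hν
  set κ := ν * μ⁻¹ with hκ
  have h0 : (κ • gam t) 0 = gam t' 0 := by rw [hν]
  have h1' : (κ • gam t) 1 = gam t' 1 := by rw [hν]
  have e0 : κ * 1 = 1 := by
    simpa [gam_apply, PiLp.smul_apply, smul_eq_mul] using h0
  have e1 : κ * t = t' := by
    simpa [gam_apply, PiLp.smul_apply, smul_eq_mul] using h1'
  rw [mul_one] at e0
  rw [e0, one_mul] at e1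
  exact htt e1

lemma exists_orthonormal_sep (P : Finset E3) :
    ∃ a b : E3, (inner ℝ a a : ℝ) = 1 ∧ (inner ℝ b b : ℝ) = 1 ∧ (inner ℝ a b : ℝ) = 0 ∧
      ∀ p ∈ P, ∀ q ∈ P, Wmap a b p = Wmap a b q → p = q := by
  classical
  set D : Finset E3 := ((P ×ˢ P).image fun q => q.1 - q.2).erase 0 with hD
  have hexists : ∃ t : ℝ, ∀ d ∈ D, gam t ∉ (Submodule.span ℝ {d} : Submodule ℝ E3) := by
    by_contra hcon
    push_neg at hcon
    set T : Finset ℝ := (Finset.range (D.card + 1)).image (Nat.cast : ℕ → ℝ) with hT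
    have hTcard : T.card = D.card + 1 := by
      rw [hT, Finset.card_image_of_injective _ Nat.cast_injective, Finset.card_range]
    have hmaps : ∀ t ∈ T, (fun t => (hcon t).choose) t ∈ D := fun t _ => (hcon t).choose_spec.1
    obtain ⟨t, ht, t', ht', htt, heq⟩ :=
      Finset.exists_ne_map_eq_of_card_lt_of_maps_to (by omega) hmaps
    have h1 := (hcon t).choose_spec.2
    have h2 := (hcon t').choose_spec.2
    rw [heq] at h1
    set d := (hcon t').choose with hd
    have hd0 : d ≠ 0 := Finset.ne_of_mem_erase (hmaps t' ht')
    exact gam_not_parallel htt d hd0 h1 h2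
  obtain ⟨t, ht⟩ := hexists
  set c : E3 := gam t with hc
  have hc0 : c ≠ 0 := gam_ne_zero t
  set K : Submodule ℝ E3 := (ℝ ∙ c)ᗮ with hK
  have hdim : Module.finrank ℝ K = 2 := by
    have h1 : Module.finrank ℝ (ℝ ∙ c) + Module.finrank ℝ K = Module.finrank ℝ E3 :=
      Submodule.finrank_add_finrank_orthogonal (K := ℝ ∙ c)
    have h2 : Module.finrank ℝ (ℝ ∙ c) = 1 := finrank_span_singleton hc0
    have h3 : Module.finrank ℝ E3 = 3 := by simp
    omega
  set onb : OrthonormalBasis (Fin 2) ℝ K := (stdOrthonormalBasis ℝ K).reindex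
    (finCongr hdim) with honb
  refine ⟨(onb 0 : E3), (onb 1 : E3), ?_, ?_, ?_, ?_⟩
  · have h1 : ‖((onb 0 : K) : E3)‖ = 1 := by
      rw [Submodule.norm_coe]; exact onb.orthonormal.1 0
    rw [real_inner_self_eq_norm_mul_norm, h1]; norm_num
  · have h1 : ‖((onb 1 : K) : E3)‖ = 1 := by
      rw [Submodule.norm_coe]; exact onb.orthonormal.1 1
    rw [real_inner_self_eq_norm_mul_norm, h1]; norm_num
  · have := onb.orthonormal.2 (i := 0) (j := 1) (by decide)
    exact this
  · intro p hp q hq hW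
    by_contra hpq
    set aa : E3 := (onb 0 : E3)
    set bb : E3 := (onb 1 : E3)
    have hWp := hW
    rw [Wmap_apply, Wmap_apply] at hWp
    have hre : (inner ℝ aa p : ℝ) = inner ℝ aa q ∧ (inner ℝ bb p : ℝ) = inner ℝ bb q := by
      constructor
      · have := congrArg Complex.re hWp; simpa using this
      · have := congrArg Complex.im hWp; simpa using this
    have hsub_a : (inner ℝ aa (p - q) : ℝ) = 0 := by
      rw [inner_sub_right, hre.1]; ring
    have hsub_b : (inner ℝ bb (p - q) : ℝ) = 0 := by
      rw [inner_sub_right, hre.2]; ring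
    have hmem : p - q ∈ Kᗮ := by
      intro z hz
      have hrepr := onb.sum_repr ⟨z, hz⟩
      have hz2 : z = (onb.repr ⟨z, hz⟩ 0 : ℝ) • aa + (onb.repr ⟨z, hz⟩ 1 : ℝ) • bb := by
        have h' := congrArg (Subtype.val) hrepr
        simp only [AddSubmonoidClass.coe_finset_sum, SetLike.val_smul, Fin.sum_univ_two] at h'
        exact h'.symm
      rw [hz2]
      simp only [inner_add_left, real_inner_smul_left, hsub_a, hsub_b, mul_zero, add_zero]
    rw [hK, Submodule.orthogonal_orthogonal] at hmem
    have hdmem : p - q ∈ D := by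
      rw [hD]
      refine Finset.mem_erase.2 ⟨sub_ne_zero.2 hpq, ?_⟩
      exact Finset.mem_image.2 ⟨(p, q), Finset.mem_product.2 ⟨hp, hq⟩, rfl⟩
    rw [Submodule.mem_span_singleton] at hmem
    obtain ⟨μ, hμ⟩ := hmem
    have hμ0 : μ ≠ 0 := by
      rintro rfl
      rw [zero_smul] at hμ
      exact hpq (sub_eq_zero.1 hμ.symm)
    have : gam t ∈ (Submodule.span ℝ {p - q} : Submodule ℝ E3) := by
      rw [Submodule.mem_span_singleton]
      exact ⟨μ⁻¹, by rw [← hμ, smul_smul, inv_mul_cancel₀ hμ0, one_smul]⟩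
    exact ht (p - q) hdmem this

/-! ### Vandermonde-type separation -/

lemma vandermonde {ι : Type*} (s : Finset ι) (z : ι → ℂ) (hz : Set.InjOn z s) (μ : ι → ℂ)
    (h : ∀ n : ℕ, ∑ i ∈ s, μ i * z i ^ n = 0) : ∀ i ∈ s, μ i = 0 := by
  classical
  have hpoly : ∀ Q : Polynomial ℂ, ∑ i ∈ s, μ i * Q.eval (z i) = 0 := by
    intro Q
    have : ∀ i, μ i * Q.eval (z i)
        = ∑ n ∈ Finset.range (Q.natDegree + 1), Q.coeff n * (μ i * z i ^ n) := by
      intro i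
      rw [Polynomial.eval_eq_sum_range, Finset.mul_sum]
      congr 1; funext n; ring
    simp only [this]
    rw [Finset.sum_comm]
    refine Finset.sum_eq_zero fun n _ => ?_
    rw [← Finset.mul_sum, h n, mul_zero]
  intro i hi
  set Q : Polynomial ℂ := ∏ j ∈ s.erase i, (Polynomial.X - Polynomial.C (z j)) with hQ
  have heval : ∀ k ∈ s, k ≠ i → Q.eval (z k) = 0 := by
    intro k hk hki
    rw [hQ, Polynomial.eval_prod]
    exact Finset.prod_eq_zero (Finset.mem_erase.2 ⟨hki, hk⟩) (by simp)
  have hevali : Q.eval (z i) ≠ 0 := by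
    rw [hQ, Polynomial.eval_prod]
    refine Finset.prod_ne_zero_iff.2 fun j hj => ?_
    have hji := (Finset.mem_erase.1 hj).1
    have hjs := (Finset.mem_erase.1 hj).2
    simp only [Polynomial.eval_sub, Polynomial.eval_X, Polynomial.eval_C, sub_ne_zero]
    exact fun e => hji (hz hjs hi e.symm)
  have := hpoly Q
  rw [Finset.sum_eq_single i (fun k hk hki => by rw [heval k hk hki, mul_zero])
    (fun his => absurd hi his)] at this
  exact (mul_eq_zero.1 this).resolve_right hevali

/-! ### Pointwise identity for piecewise constant speeds -/

lemma inv_sq_eq {N : ℕ} (b₀ : ℝ) (bb rr : Fin N → ℝ) (xx : Fin N → E3)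
    (hdisj : ∀ k l, k ≠ l → Disjoint (ball (xx k) (rr k)) (ball (xx l) (rr l))) (y : E3) :
    ((b₀ + ∑ k, (bb k - b₀) * Set.indicator (ball (xx k) (rr k)) (fun _ => (1:ℝ)) y)^2)⁻¹
      = (b₀^2)⁻¹
        + ∑ k, (((bb k)^2)⁻¹ - (b₀^2)⁻¹) * Set.indicator (ball (xx k) (rr k)) (fun _ => (1:ℝ)) y := by
  by_cases hy : ∃ m, y ∈ ball (xx m) (rr m)
  · obtain ⟨m, hm⟩ := hy
    have hind : ∀ k, k ≠ m → Set.indicator (ball (xx k) (rr k)) (fun _ => (1:ℝ)) y = 0 := by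
      intro k hk
      apply Set.indicator_of_notMem
      exact fun hyk => Set.disjoint_left.mp (hdisj k m hk) hyk hm
    have hindm : Set.indicator (ball (xx m) (rr m)) (fun _ => (1:ℝ)) y = 1 :=
      Set.indicator_of_mem hm _
    rw [Finset.sum_eq_single m (fun k _ hk => by rw [hind k hk, mul_zero])
        (fun hms => absurd (Finset.mem_univ m) hms),
      Finset.sum_eq_single m (fun k _ hk => by rw [hind k hk, mul_zero])
        (fun hms => absurd (Finset.mem_univ m) hms),
      hindm, mul_one, mul_one]
    rw [show b₀ + (bb m - b₀) = bb m from by ring]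
    ring
  · push_neg at hy
    have hind : ∀ k, Set.indicator (ball (xx k) (rr k)) (fun _ => (1:ℝ)) y = 0 := by
      intro k
      exact Set.indicator_of_notMem (hy k) _
    rw [Finset.sum_eq_zero (fun k _ => by rw [hind k, mul_zero]),
      Finset.sum_eq_zero (fun k _ => by rw [hind k, mul_zero]), add_zero, add_zero]

/-! ### Integral of an indicator combination against a test function -/

lemma sum_indicator_integral {N : ℕ} (R₀ : ℝ) (lam rr : Fin N → ℝ) (xx : Fin N → E3)
    (hsub : ∀ k, ball (xx k) (rr k) ⊆ ball (0 : E3) R₀)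
    (φ : E3 → ℝ) (hφ : Continuous φ) :
    IntegrableOn
      (fun y => (∑ k, lam k * Set.indicator (ball (xx k) (rr k)) (fun _ => (1:ℝ)) y) * φ y)
      (ball (0 : E3) R₀) volume
    ∧ ∫ y in ball (0 : E3) R₀,
        (∑ k, lam k * Set.indicator (ball (xx k) (rr k)) (fun _ => (1:ℝ)) y) * φ y
      = ∑ k, lam k * ∫ y in ball (xx k) (rr k), φ y := by
  have hφint : IntegrableOn φ (ball (0 : E3) R₀) volume :=
    (hφ.locallyIntegrable.integrableOn_isCompact (isCompact_closedBall (0:E3) R₀)).mono_set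
      ball_subset_closedBall
  have hrw : (fun y => (∑ k, lam k * Set.indicator (ball (xx k) (rr k)) (fun _ => (1:ℝ)) y) * φ y)
      = fun y => ∑ k, lam k * Set.indicator (ball (xx k) (rr k)) φ y := by
    funext y
    rw [Finset.sum_mul]
    refine Finset.sum_congr rfl fun k _ => ?_
    by_cases hmem : y ∈ ball (xx k) (rr k)
    · rw [Set.indicator_of_mem hmem, Set.indicator_of_mem hmem]; ring
    · rw [Set.indicator_of_notMem hmem, Set.indicator_of_notMem hmem]; ring
  have hterm : ∀ k, Integrable (fun y => lam k * Set.indicator (ball (xx k) (rr k)) φ y)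
      (volume.restrict (ball (0 : E3) R₀)) :=
    fun k => ((hφint.indicator measurableSet_ball).const_mul _)
  constructor
  · rw [hrw]
    exact integrable_finset_sum _ (fun k _ => hterm k)
  · rw [hrw, integral_finset_sum _ (fun k _ => hterm k)]
    refine Finset.sum_congr rfl fun k _ => ?_
    rw [integral_const_mul, setIntegral_indicator measurableSet_ball,
      Set.inter_eq_self_of_subset_right (hsub k)]

lemma sq_pos_inj {x y : ℝ} (hx : 0 < x) (hy : 0 < y) (h : x^2 = y^2) : x = y := by
  nlinarith

lemma cube_pos_inj {x y : ℝ} (hx : 0 < x) (hy : 0 < y) (h : x^3 = y^3) : x = y := by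
  rcases lt_trichotomy x y with hlt | he | hgt
  · have := pow_lt_pow_left₀ hlt hx.le (by norm_num : (3:ℕ) ≠ 0); linarith
  · exact he
  · have := pow_lt_pow_left₀ hgt hy.le (by norm_num : (3:ℕ) ≠ 0); linarith

end
end SpeedDet
open SpeedDet in
/-- Determination of piecewise constant sound speeds over disjoint balls,
assuming (i) for every common index either the values or the radii coincide, and
(ii) the centers of each family form a chain for some partial order on `ℝ³`.  The
orthogonality relation against all harmonic test functions then forces the two
configurations, hence the two speeds, to coincide. -/
theorem speed_determination_ordered_centers
    (R₀ b₀ : ℝ) (hR₀ : 0 < R₀) (hb₀ : 0 < b₀) (N₁ N₂ : ℕ)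
    (b₁ : Fin N₁ → ℝ) (b₂ : Fin N₂ → ℝ)
    (r₁ : Fin N₁ → ℝ) (r₂ : Fin N₂ → ℝ)
    (hb₁pos : ∀ k, 0 < b₁ k) (hb₂pos : ∀ k, 0 < b₂ k)
    (hb₁ne : ∀ k, b₁ k ≠ b₀) (hb₂ne : ∀ k, b₂ k ≠ b₀)
    (hr₁ : ∀ k, 0 < r₁ k) (hr₂ : ∀ k, 0 < r₂ k)
    (x₁ : Fin N₁ → EuclideanSpace ℝ (Fin 3)) (x₂ : Fin N₂ → EuclideanSpace ℝ (Fin 3))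
    (hsub₁ : ∀ k, closedBall (x₁ k) (r₁ k) ⊆ ball (0 : EuclideanSpace ℝ (Fin 3)) R₀)
    (hsub₂ : ∀ k, closedBall (x₂ k) (r₂ k) ⊆ ball (0 : EuclideanSpace ℝ (Fin 3)) R₀)
    (hdisj₁ : ∀ k l, k ≠ l → Disjoint (ball (x₁ k) (r₁ k)) (ball (x₁ l) (r₁ l)))
    (hdisj₂ : ∀ k l, k ≠ l → Disjoint (ball (x₂ k) (r₂ k)) (ball (x₂ l) (r₂ l)))
    -- (i) for every common index, the values or the radii coincide
    (hmin : ∀ (k : ℕ) (h₁ : k < N₁) (h₂ : k < N₂),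
        b₁ ⟨k, h₁⟩ = b₂ ⟨k, h₂⟩ ∨ r₁ ⟨k, h₁⟩ = r₂ ⟨k, h₂⟩)
    -- (ii) a partial order on ℝ³ ordering the centers of each family
    (le : EuclideanSpace ℝ (Fin 3) → EuclideanSpace ℝ (Fin 3) → Prop)
    (hrefl : ∀ a, le a a)
    (hantisymm : ∀ a b, le a b → le b a → a = b)
    (htrans : ∀ a b c, le a b → le b c → le a c)
    (hchain₁ : ∀ (k : ℕ) (h : k + 1 < N₁), le (x₁ ⟨k, by omega⟩) (x₁ ⟨k + 1, h⟩))
    (hchain₂ : ∀ (k : ℕ) (h : k + 1 < N₂), le (x₂ ⟨k, by omega⟩) (x₂ ⟨k + 1, h⟩))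
    (c₁ c₂ : EuclideanSpace ℝ (Fin 3) → ℝ)
    (hc₁ : c₁ = fun y => b₀ + ∑ k, (b₁ k - b₀) *
        Set.indicator (ball (x₁ k) (r₁ k)) (fun _ => (1 : ℝ)) y)
    (hc₂ : c₂ = fun y => b₀ + ∑ k, (b₂ k - b₀) *
        Set.indicator (ball (x₂ k) (r₂ k)) (fun _ => (1 : ℝ)) y)
    (h : ∀ φ : EuclideanSpace ℝ (Fin 3) → ℝ,
        ContDiffOn ℝ 2 φ (ball (0 : EuclideanSpace ℝ (Fin 3)) R₀) →
        (∀ y ∈ ball (0 : EuclideanSpace ℝ (Fin 3)) R₀, lap φ y = 0) →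
        ∫ y in ball (0 : EuclideanSpace ℝ (Fin 3)) R₀,
          (((c₁ y) ^ 2)⁻¹ - ((c₂ y) ^ 2)⁻¹) * φ y = 0) :
    N₁ = N₂ ∧
      (∀ (k : ℕ) (h₁ : k < N₁) (h₂ : k < N₂),
        x₁ ⟨k, h₁⟩ = x₂ ⟨k, h₂⟩ ∧ b₁ ⟨k, h₁⟩ = b₂ ⟨k, h₂⟩ ∧ r₁ ⟨k, h₁⟩ = r₂ ⟨k, h₂⟩) ∧
      c₁ = c₂ := by
  classical
  -- injectivity of the centers
  have hx₁inj : Function.Injective x₁ := by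
    intro k l hkl
    by_contra hne
    have h1 : x₁ k ∈ ball (x₁ k) (r₁ k) := mem_ball_self (hr₁ k)
    have h2 : x₁ k ∈ ball (x₁ l) (r₁ l) := by rw [hkl]; exact mem_ball_self (hr₁ l)
    exact Set.disjoint_left.mp (hdisj₁ k l hne) h1 h2
  have hx₂inj : Function.Injective x₂ := by
    intro k l hkl
    by_contra hne
    have h1 : x₂ k ∈ ball (x₂ k) (r₂ k) := mem_ball_self (hr₂ k)
    have h2 : x₂ k ∈ ball (x₂ l) (r₂ l) := by rw [hkl]; exact mem_ball_self (hr₂ l)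
    exact Set.disjoint_left.mp (hdisj₂ k l hne) h1 h2
  -- contrasts and weights
  set lam₁ : Fin N₁ → ℝ := fun k => ((b₁ k)^2)⁻¹ - (b₀^2)⁻¹ with hlam₁def
  set lam₂ : Fin N₂ → ℝ := fun l => ((b₂ l)^2)⁻¹ - (b₀^2)⁻¹ with hlam₂def
  set v₁ : Fin N₁ → ℝ := fun k => (volume (ball (x₁ k) (r₁ k))).toReal with hv₁def
  set v₂ : Fin N₂ → ℝ := fun l => (volume (ball (x₂ l) (r₂ l))).toReal with hv₂def
  have hv₁pos : ∀ k, 0 < v₁ k := fun k =>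
    ENNReal.toReal_pos (measure_ball_pos volume _ (hr₁ k)).ne' measure_ball_lt_top.ne
  have hv₂pos : ∀ l, 0 < v₂ l := fun l =>
    ENNReal.toReal_pos (measure_ball_pos volume _ (hr₂ l)).ne' measure_ball_lt_top.ne
  have hlam₁ne : ∀ k, lam₁ k ≠ 0 := by
    intro k hcon
    apply hb₁ne k
    have h1 : ((b₁ k)^2)⁻¹ = (b₀^2)⁻¹ := by
      have := sub_eq_zero.mp hcon; exact this
    have h2 : (b₁ k)^2 = b₀^2 := inv_injective h1
    exact sq_pos_inj (hb₁pos k) hb₀ h2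
  have hlam₂ne : ∀ l, lam₂ l ≠ 0 := by
    intro l hcon
    apply hb₂ne l
    have h1 : ((b₂ l)^2)⁻¹ = (b₀^2)⁻¹ := by
      have := sub_eq_zero.mp hcon; exact this
    have h2 : (b₂ l)^2 = b₀^2 := inv_injective h1
    exact sq_pos_inj (hb₂pos l) hb₀ h2
  set μ₁ : Fin N₁ → ℝ := fun k => lam₁ k * v₁ k with hμ₁def
  set μ₂ : Fin N₂ → ℝ := fun l => lam₂ l * v₂ l with hμ₂def
  have hμ₁ne : ∀ k, μ₁ k ≠ 0 := fun k => mul_ne_zero (hlam₁ne k) (hv₁pos k).ne'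
  have hμ₂ne : ∀ l, μ₂ l ≠ 0 := fun l => mul_ne_zero (hlam₂ne l) (hv₂pos l).ne'
  -- generic direction
  set P : Finset (EuclideanSpace ℝ (Fin 3)) :=
    (Finset.univ.image x₁) ∪ (Finset.univ.image x₂) with hPdef
  obtain ⟨a, b, ha, hb, hab, hinj⟩ := exists_orthonormal_sep P
  set W := Wmap a b with hWdef
  have hx₁P : ∀ k, x₁ k ∈ P := fun k => by
    rw [hPdef]
    exact Finset.mem_union_left _ (Finset.mem_image.2 ⟨k, Finset.mem_univ k, rfl⟩)
  have hx₂P : ∀ l, x₂ l ∈ P := fun l => by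
    rw [hPdef]
    exact Finset.mem_union_right _ (Finset.mem_image.2 ⟨l, Finset.mem_univ l, rfl⟩)
  -- harmonicity constant
  have hQ : ∑ i : Fin 3, (W (EuclideanSpace.single i 1))^2 = 0 := by
    have hWi : ∀ i : Fin 3, W (EuclideanSpace.single i 1) = (a i : ℂ) + (b i : ℂ) * Complex.I := by
      intro i
      rw [hWdef, Wmap_apply]
      simp [EuclideanSpace.inner_single_right]
    have ha' : ∑ i : Fin 3, a i * a i = 1 := by
      have h' := ha; rw [PiLp.inner_apply] at h'
      simpa [RCLike.inner_apply, conj_trivial, pow_two] using h'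
    have hb' : ∑ i : Fin 3, b i * b i = 1 := by
      have h' := hb; rw [PiLp.inner_apply] at h'
      simpa [RCLike.inner_apply, conj_trivial, pow_two] using h'
    have hab' : ∑ i : Fin 3, a i * b i = 0 := by
      have h' := hab; rw [PiLp.inner_apply] at h'
      simpa [RCLike.inner_apply, conj_trivial, mul_comm] using h'
    apply Complex.ext
    · rw [Complex.re_sum]
      have hterm : ∀ i : Fin 3, ((W (EuclideanSpace.single i 1))^2).re
          = a i * a i - b i * b i := by
        intro i
        rw [hWi i]
        simp [pow_two, Complex.mul_re]
      rw [Finset.sum_congr rfl (fun i _ => hterm i), Finset.sum_sub_distrib, ha', hb']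
      simp
    · rw [Complex.im_sum]
      have hterm : ∀ i : Fin 3, ((W (EuclideanSpace.single i 1))^2).im
          = a i * b i + a i * b i := by
        intro i
        rw [hWi i]
        simp [pow_two, Complex.mul_im]
        ring
      rw [Finset.sum_congr rfl (fun i _ => hterm i), Finset.sum_add_distrib, hab']
      simp
  -- moments against T ∘ (W ·)^n
  have hmomT : ∀ (T : ℂ →L[ℝ] ℝ) (n : ℕ),
      ∑ k, μ₁ k * T ((W (x₁ k))^n) = ∑ l, μ₂ l * T ((W (x₂ l))^n) := by
    intro T n
    set φ : EuclideanSpace ℝ (Fin 3) → ℝ := fun y => T ((W y)^n) with hφdef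
    have hφc : Continuous φ := T.continuous.comp (W.continuous.pow n)
    have hφcd : ContDiffOn ℝ 2 φ (ball (0 : EuclideanSpace ℝ (Fin 3)) R₀) :=
      ((T.contDiff.comp (W.contDiff.pow n)).of_le le_top).contDiffOn
    have hlap0 : ∀ y ∈ ball (0 : EuclideanSpace ℝ (Fin 3)) R₀, lap φ y = 0 :=
      fun y _ => lap_Tpow T W hQ n y
    have h0 := h φ hφcd hlap0
    have hsub₁' : ∀ k, ball (x₁ k) (r₁ k) ⊆ ball (0 : EuclideanSpace ℝ (Fin 3)) R₀ :=
      fun k => ball_subset_closedBall.trans (hsub₁ k)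
    have hsub₂' : ∀ l, ball (x₂ l) (r₂ l) ⊆ ball (0 : EuclideanSpace ℝ (Fin 3)) R₀ :=
      fun l => ball_subset_closedBall.trans (hsub₂ l)
    obtain ⟨hint₁, heq₁⟩ := sum_indicator_integral R₀ lam₁ r₁ x₁ hsub₁' φ hφc
    obtain ⟨hint₂, heq₂⟩ := sum_indicator_integral R₀ lam₂ r₂ x₂ hsub₂' φ hφc
    have hpt : ∀ y, (((c₁ y)^2)⁻¹ - ((c₂ y)^2)⁻¹) * φ y
        = (∑ k, lam₁ k * Set.indicator (ball (x₁ k) (r₁ k)) (fun _ => (1:ℝ)) y) * φ y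
          - (∑ l, lam₂ l * Set.indicator (ball (x₂ l) (r₂ l)) (fun _ => (1:ℝ)) y) * φ y := by
      intro y
      rw [hc₁, hc₂]
      simp only
      rw [inv_sq_eq b₀ b₁ r₁ x₁ hdisj₁ y, inv_sq_eq b₀ b₂ r₂ x₂ hdisj₂ y]
      simp only [hlam₁def, hlam₂def]
      ring
    simp only [hpt] at h0
    rw [integral_sub hint₁ hint₂, heq₁, heq₂, sub_eq_zero] at h0
    have hball : ∀ (p : EuclideanSpace ℝ (Fin 3)) (r : ℝ),
        (∫ y in ball p r, φ y) = (volume (ball p r)).toReal * T ((W p)^n) := by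
      intro p r
      have hint : IntegrableOn (fun y => (W y)^n) (ball p r) volume := by
        have := integrableOn_pow W 1 n p r
        simpa using this
      have hcomm : ∫ y in ball p r, T ((W y)^n) = T (∫ y in ball p r, (W y)^n) :=
        T.integral_comp_comm hint
      rw [hφdef]
      simp only
      rw [hcomm, hWdef, integral_pow_ball ha hb hab n p r, _root_.map_smul, smul_eq_mul, ← hWdef]
    have e1 : ∑ k, μ₁ k * T ((W (x₁ k))^n)
        = ∑ k, lam₁ k * ∫ y in ball (x₁ k) (r₁ k), φ y := by
      refine Finset.sum_congr rfl fun k _ => ?_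
      rw [hball (x₁ k) (r₁ k)]
      simp only [hμ₁def, hv₁def]
      ring
    have e2 : ∑ l, μ₂ l * T ((W (x₂ l))^n)
        = ∑ l, lam₂ l * ∫ y in ball (x₂ l) (r₂ l), φ y := by
      refine Finset.sum_congr rfl fun l _ => ?_
      rw [hball (x₂ l) (r₂ l)]
      simp only [hμ₂def, hv₂def]
      ring
    rw [e1, e2]
    exact h0
  -- complex moments
  have hmom : ∀ n : ℕ, ∑ k, (μ₁ k : ℂ) * (W (x₁ k))^n = ∑ l, (μ₂ l : ℂ) * (W (x₂ l))^n := by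
    intro n
    have hre := hmomT Complex.reCLM n
    have him := hmomT Complex.imCLM n
    simp only [Complex.reCLM_apply] at hre
    simp only [Complex.imCLM_apply] at him
    have hmulre : ∀ (m : ℝ) (z : ℂ), ((m : ℂ) * z).re = m * z.re := by
      intro m z; simp [Complex.mul_re]
    have hmulim : ∀ (m : ℝ) (z : ℂ), ((m : ℂ) * z).im = m * z.im := by
      intro m z; simp [Complex.mul_im]
    apply Complex.ext
    · rw [Complex.re_sum, Complex.re_sum]
      simp only [hmulre]
      exact hre
    · rw [Complex.im_sum, Complex.im_sum]
      simp only [hmulim]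
      exact him
  -- fiberwise coefficients vanish
  set ν : EuclideanSpace ℝ (Fin 3) → ℂ := fun p =>
    (∑ k ∈ Finset.univ.filter (fun k => x₁ k = p), (μ₁ k : ℂ))
      - ∑ l ∈ Finset.univ.filter (fun l => x₂ l = p), (μ₂ l : ℂ) with hνdef
  have hν0 : ∀ p ∈ P, ν p = 0 := by
    have hsum : ∀ n : ℕ, ∑ p ∈ P, ν p * (W p)^n = 0 := by
      intro n
      have h₁ : ∑ p ∈ P, (∑ k ∈ Finset.univ.filter (fun k => x₁ k = p), (μ₁ k : ℂ)) * (W p)^n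
          = ∑ k, (μ₁ k : ℂ) * (W (x₁ k))^n := by
        rw [← Finset.sum_fiberwise_of_maps_to (fun k _ => hx₁P k)
          (fun k => (μ₁ k : ℂ) * (W (x₁ k))^n)]
        refine Finset.sum_congr rfl fun p _ => ?_
        rw [Finset.sum_mul]
        refine Finset.sum_congr rfl fun k hk => ?_
        rw [(Finset.mem_filter.mp hk).2]
      have h₂ : ∑ p ∈ P, (∑ l ∈ Finset.univ.filter (fun l => x₂ l = p), (μ₂ l : ℂ)) * (W p)^n
          = ∑ l, (μ₂ l : ℂ) * (W (x₂ l))^n := by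
        rw [← Finset.sum_fiberwise_of_maps_to (fun l _ => hx₂P l)
          (fun l => (μ₂ l : ℂ) * (W (x₂ l))^n)]
        refine Finset.sum_congr rfl fun p _ => ?_
        rw [Finset.sum_mul]
        refine Finset.sum_congr rfl fun l hl => ?_
        rw [(Finset.mem_filter.mp hl).2]
      simp only [hνdef, sub_mul]
      rw [Finset.sum_sub_distrib, h₁, h₂, hmom n, sub_self]
    exact vandermonde P (fun p => W p)
      (fun p hp q hq e => hinj p (Finset.mem_coe.mp hp) q (Finset.mem_coe.mp hq) e) ν hsum
  -- matching
  have hmatch₁ : ∀ k : Fin N₁, ∃ l : Fin N₂, x₂ l = x₁ k ∧ μ₁ k = μ₂ l := by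
    intro k
    have h0 := hν0 (x₁ k) (hx₁P k)
    simp only [hνdef] at h0
    have hf1 : Finset.univ.filter (fun j => x₁ j = x₁ k) = {k} := by
      ext j
      simp only [Finset.mem_filter, Finset.mem_univ, true_and, Finset.mem_singleton]
      exact ⟨fun hj => hx₁inj hj, fun hj => by rw [hj]⟩
    rw [hf1, Finset.sum_singleton] at h0
    rcases Finset.eq_empty_or_nonempty (Finset.univ.filter (fun l => x₂ l = x₁ k)) with
      hemp | ⟨l, hl⟩
    · exfalso
      rw [hemp, Finset.sum_empty, sub_zero] at h0
      exact hμ₁ne k (by exact_mod_cast h0)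
    · have hxl : x₂ l = x₁ k := (Finset.mem_filter.mp hl).2
      have hf2 : Finset.univ.filter (fun j => x₂ j = x₁ k) = {l} := by
        ext j
        simp only [Finset.mem_filter, Finset.mem_univ, true_and, Finset.mem_singleton]
        exact ⟨fun hj => hx₂inj (hj.trans hxl.symm), fun hj => by rw [hj]; exact hxl⟩
      rw [hf2, Finset.sum_singleton, sub_eq_zero] at h0
      exact ⟨l, hxl, by exact_mod_cast h0⟩
  have hmatch₂ : ∀ l : Fin N₂, ∃ k : Fin N₁, x₁ k = x₂ l ∧ μ₂ l = μ₁ k := by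
    intro l
    have h0 := hν0 (x₂ l) (hx₂P l)
    simp only [hνdef] at h0
    have hf2 : Finset.univ.filter (fun j => x₂ j = x₂ l) = {l} := by
      ext j
      simp only [Finset.mem_filter, Finset.mem_univ, true_and, Finset.mem_singleton]
      exact ⟨fun hj => hx₂inj hj, fun hj => by rw [hj]⟩
    rw [hf2, Finset.sum_singleton] at h0
    rcases Finset.eq_empty_or_nonempty (Finset.univ.filter (fun k => x₁ k = x₂ l)) with
      hemp | ⟨k, hk⟩
    · exfalso
      rw [hemp, Finset.sum_empty, zero_sub, neg_eq_zero] at h0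
      exact hμ₂ne l (by exact_mod_cast h0)
    · have hxk : x₁ k = x₂ l := (Finset.mem_filter.mp hk).2
      have hf1 : Finset.univ.filter (fun j => x₁ j = x₂ l) = {k} := by
        ext j
        simp only [Finset.mem_filter, Finset.mem_univ, true_and, Finset.mem_singleton]
        exact ⟨fun hj => hx₁inj (hj.trans hxk.symm), fun hj => by rw [hj]; exact hxk⟩
      rw [hf1, Finset.sum_singleton, sub_eq_zero] at h0
      exact ⟨k, hxk, by exact_mod_cast h0.symm⟩
  -- N₁ = N₂
  have hN : N₁ = N₂ := by
    have himg : Finset.univ.image x₁ = Finset.univ.image x₂ := by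
      apply Finset.Subset.antisymm
      · intro p hp
        obtain ⟨k, -, rfl⟩ := Finset.mem_image.mp hp
        obtain ⟨l, hl, -⟩ := hmatch₁ k
        exact Finset.mem_image.2 ⟨l, Finset.mem_univ l, hl⟩
      · intro p hp
        obtain ⟨l, -, rfl⟩ := Finset.mem_image.mp hp
        obtain ⟨k, hk, -⟩ := hmatch₂ l
        exact Finset.mem_image.2 ⟨k, Finset.mem_univ k, hk⟩
    have h1 : (Finset.univ.image x₁).card = N₁ := by
      rw [Finset.card_image_of_injective _ hx₁inj, Finset.card_univ, Fintype.card_fin]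
    have h2 : (Finset.univ.image x₂).card = N₂ := by
      rw [Finset.card_image_of_injective _ hx₂inj, Finset.card_univ, Fintype.card_fin]
    rw [← h1, ← h2, himg]
  subst hN
  -- chains are monotone
  have hmono₁ : ∀ (i j : ℕ) (hi : i < N₁) (hj : j < N₁), i ≤ j →
      le (x₁ ⟨i, hi⟩) (x₁ ⟨j, hj⟩) := by
    intro i j hi hj hij
    induction j with
    | zero =>
        have : i = 0 := Nat.le_zero.mp hij
        subst this
        exact hrefl _
    | succ m ihm =>
        rcases Nat.lt_or_ge i (m+1) with hlt | hge
        · have him : i ≤ m := by omega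
          have hm : m < N₁ := by omega
          exact htrans _ _ _ (ihm hm him) (hchain₁ m hj)
        · have : i = m + 1 := by omega
          subst this
          exact hrefl _
  have hmono₂ : ∀ (i j : ℕ) (hi : i < N₁) (hj : j < N₁), i ≤ j →
      le (x₂ ⟨i, hi⟩) (x₂ ⟨j, hj⟩) := by
    intro i j hi hj hij
    induction j with
    | zero =>
        have : i = 0 := Nat.le_zero.mp hij
        subst this
        exact hrefl _
    | succ m ihm =>
        rcases Nat.lt_or_ge i (m+1) with hlt | hge
        · have him : i ≤ m := by omega
          have hm : m < N₁ := by omega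
          exact htrans _ _ _ (ihm hm him) (hchain₂ m hj)
        · have : i = m + 1 := by omega
          subst this
          exact hrefl _
  -- equality of centers, by strong induction
  have hxeq : ∀ (k : ℕ) (hk : k < N₁), x₁ ⟨k, hk⟩ = x₂ ⟨k, hk⟩ := by
    intro k
    induction k using Nat.strong_induction_on with
    | _ k IH =>
      intro hk
      obtain ⟨l, hl, -⟩ := hmatch₁ ⟨k, hk⟩
      rcases lt_trichotomy (l : ℕ) k with hlt | heq | hgt
      · exfalso
        have h1 : x₁ ⟨(l : ℕ), by omega⟩ = x₂ ⟨(l : ℕ), l.isLt⟩ := IH l hlt (by omega)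
        have h2 : x₂ ⟨(l : ℕ), l.isLt⟩ = x₂ l := by congr
        have h3 : x₁ ⟨(l : ℕ), by omega⟩ = x₁ ⟨k, hk⟩ := by rw [h1, h2, hl]
        have := hx₁inj h3
        simp only [Fin.mk.injEq] at this
        omega
      · have hlk : l = ⟨k, hk⟩ := Fin.ext heq
        rw [hlk] at hl
        exact hl.symm
      · obtain ⟨m, hm, -⟩ := hmatch₂ ⟨k, hk⟩
        rcases lt_trichotomy (m : ℕ) k with hlt' | heq' | hgt'
        · exfalso
          have h1 : x₁ ⟨(m : ℕ), m.isLt⟩ = x₂ ⟨(m : ℕ), by omega⟩ := IH m hlt' (by omega)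
          have h2 : x₁ ⟨(m : ℕ), m.isLt⟩ = x₁ m := by congr
          have h3 : x₂ ⟨(m : ℕ), by omega⟩ = x₂ ⟨k, hk⟩ := by rw [← h1, h2, hm]
          have := hx₂inj h3
          simp only [Fin.mk.injEq] at this
          omega
        · have hmk : m = ⟨k, hk⟩ := Fin.ext heq'
          rw [hmk] at hm
          exact hm
        · apply hantisymm
          · have h1 : le (x₁ ⟨k, hk⟩) (x₁ ⟨(m : ℕ), m.isLt⟩) :=
              hmono₁ k (m : ℕ) hk m.isLt (le_of_lt hgt')
            have h2 : x₁ ⟨(m : ℕ), m.isLt⟩ = x₁ m := by congr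
            rw [h2, hm] at h1
            exact h1
          · have h1 : le (x₂ ⟨k, hk⟩) (x₂ ⟨(l : ℕ), l.isLt⟩) :=
              hmono₂ k (l : ℕ) hk l.isLt (le_of_lt hgt)
            have h2 : x₂ ⟨(l : ℕ), l.isLt⟩ = x₂ l := by congr
            rw [h2, hl] at h1
            exact h1
  -- matched weights at equal indices
  have hμeq : ∀ k : Fin N₁, μ₁ k = μ₂ k := by
    intro k
    obtain ⟨l, hl, hμ⟩ := hmatch₁ k
    have hxk : x₁ k = x₂ k := by
      have := hxeq (k : ℕ) k.isLt
      simpa using this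
    have : x₂ l = x₂ k := by rw [hl, hxk]
    rw [hx₂inj this] at hμ
    exact hμ
  -- per-index equality of b and r
  have hbr : ∀ (k : ℕ) (h₁ : k < N₁) (h₂ : k < N₁),
      b₁ ⟨k, h₁⟩ = b₂ ⟨k, h₂⟩ ∧ r₁ ⟨k, h₁⟩ = r₂ ⟨k, h₂⟩ := by
    intro k h₁ h₂
    have hpf : h₁ = h₂ := rfl
    set K : Fin N₁ := ⟨k, h₁⟩ with hKdef
    have hμ : μ₁ K = μ₂ K := hμeq K
    have hvform : ∀ (p : EuclideanSpace ℝ (Fin 3)) (r : ℝ), 0 ≤ r →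
        (volume (ball p r)).toReal
          = r^3 * (volume (ball (0 : EuclideanSpace ℝ (Fin 3)) 1)).toReal := by
      intro p r hr
      rw [Measure.addHaar_ball volume p hr, ENNReal.toReal_mul,
        ENNReal.toReal_ofReal (by positivity)]
      congr 2
      simp
    have hCpos : 0 < (volume (ball (0 : EuclideanSpace ℝ (Fin 3)) 1)).toReal :=
      ENNReal.toReal_pos (measure_ball_pos volume _ one_pos).ne' measure_ball_lt_top.ne
    rcases hmin k h₁ h₂ with hbeq | hreq
    · have hlameq : lam₁ K = lam₂ K := by
        rw [hlam₁def, hlam₂def]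
        simp only
        rw [hbeq]
      have hveq : v₁ K = v₂ K := by
        have := hμ
        rw [hμ₁def, hμ₂def] at this
        simp only at this
        rw [hlameq] at this
        exact mul_left_cancel₀ (hlam₂ne K) this
      have hr3 : (r₁ K)^3 = (r₂ K)^3 := by
        have e1 : v₁ K = (r₁ K)^3 * _ := hvform (x₁ K) (r₁ K) (hr₁ K).le
        have e2 : v₂ K = (r₂ K)^3 * _ := hvform (x₂ K) (r₂ K) (hr₂ K).le
        rw [e1, e2] at hveq
        exact mul_right_cancel₀ hCpos.ne' hveq
      exact ⟨hbeq, cube_pos_inj (hr₁ K) (hr₂ K) hr3⟩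
    · have hveq : v₁ K = v₂ K := by
        rw [hv₁def, hv₂def]
        simp only
        rw [hvform _ _ (hr₁ K).le, hvform _ _ (hr₂ K).le, hreq]
      have hlameq : lam₁ K = lam₂ K := by
        have := hμ
        rw [hμ₁def, hμ₂def] at this
        simp only at this
        rw [hveq] at this
        exact mul_right_cancel₀ (hv₂pos K).ne' this
      have hbe : b₁ K = b₂ K := by
        have h1 : ((b₁ K)^2)⁻¹ = ((b₂ K)^2)⁻¹ := by
          have := hlameq
          rw [hlam₁def, hlam₂def] at this
          simp only at this
          linarith
        exact sq_pos_inj (hb₁pos K) (hb₂pos K) (inv_injective h1)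
      exact ⟨hbe, hreq⟩
  -- conclusion
  refine ⟨rfl, ?_, ?_⟩
  · intro k h₁ h₂
    exact ⟨hxeq k h₁, (hbr k h₁ h₂).1, (hbr k h₁ h₂).2⟩
  · have hbf : b₁ = b₂ := funext fun k => (hbr (k : ℕ) k.isLt k.isLt).1
    have hrf : r₁ = r₂ := funext fun k => (hbr (k : ℕ) k.isLt k.isLt).2
    have hxf : x₁ = x₂ := funext fun k => hxeq (k : ℕ) k.isLt
    rw [hc₁, hc₂, hbf, hrf, hxf]
end

section
/- Let R₀ > 0, b₀ > 0 and b₁ > 0 with b₁ ≠ b₀. For j = 1,2 let m_j, n_j ∈ ℕ and let x₁^j, …, x_{m_j}^j, y₁^j, …, y_{n_j}^j be m_j + n_j pairwise distinct points of ℝ³ with radii r_p^j > 0 (p = 1,…,m_j) and s_ℓ^j > 0 (ℓ = 1,…,n_j), such that: the balls B(x_p^j, r_p^j) are pairwise disjoint with closures contained in B(0,R₀); the balls B(y_ℓ^j, s_ℓ^j) are pairwise disjoint; and for each ℓ the closed ball cl B(y_ℓ^j, s_ℓ^j) is contained in B(x_p^j, r_p^j) for some p. Set ω^j := (∪_{p=1}^{m_j}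 B(x_p^j, r_p^j)) ∖ (∪_{ℓ=1}^{n_j} cl B(y_ℓ^j, s_ℓ^j)) and c_j := b₀ + (b₁ − b₀) 1_{ω^j}. If ∫_{B(0,R₀)} (c₁(x)^{−2} − c₂(x)^{−2}) φ(x) dx = 0 for every function φ : ℝ³ → ℝ that is twice continuously differentiable and harmonic on B(0,R₀), then m₁ = m₂, n₁ = n₂, and there exist bijections σ₁ of {1,…,m₁} and σ₂ of {1,…,n₁} such that x_p¹ = x_{σ₁(p)}², r_p¹ = r_{σ₁(p)}² for all p and y_ℓ¹ = y_{σ₂(ℓ)}², s_ℓ¹ = s_{σ₂(ℓ)}² for all ℓ; in particular ω¹ = ω² and c₁ = c₂. -/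
open MeasureTheory Metric

section SpeedDetAux

open Complex
open scoped RealInnerProductSpace

local notation "E₃" => EuclideanSpace ℝ (Fin 3)

noncomputable instance decEqE₃ : DecidableEq (EuclideanSpace ℝ (Fin 3)) := Classical.decEq _

/-- rotation by (c,s) in the first two coordinates, as a linear map. -/
noncomputable def rotL (c s : ℝ) : E₃ →ₗ[ℝ] E₃ where
  toFun x := WithLp.toLp 2 ![c * x 0 - s * x 1, s * x 0 + c * x 1, x 2]
  map_add' x y := by
    ext i
    fin_cases i
    · show c * (x 0 + y 0) - s * (x 1 + y 1) = (c * x 0 - s * x 1) + (c * y 0 - s * y 1); ring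
    · show s * (x 0 + y 0) + c * (x 1 + y 1) = (s * x 0 + c * x 1) + (s * y 0 + c * y 1); ring
    · rfl
  map_smul' t x := by
    ext i
    fin_cases i
    · show c * (t * x 0) - s * (t * x 1) = t * (c * x 0 - s * x 1); ring
    · show s * (t * x 0) + c * (t * x 1) = t * (s * x 0 + c * x 1); ring
    · rfl

lemma rotL_apply0 (c s : ℝ) (x : E₃) : rotL c s x 0 = c * x 0 - s * x 1 := rfl
lemma rotL_apply1 (c s : ℝ) (x : E₃) : rotL c s x 1 = s * x 0 + c * x 1 := rfl

lemma rotL_rotL (c s : ℝ) (h : c ^ 2 + s ^ 2 = 1) (x : E₃) :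
    rotL c s (rotL c (-s) x) = x := by
  ext i
  fin_cases i
  · show c * (rotL c (-s) x 0) - s * (rotL c (-s) x 1) = x 0
    rw [rotL_apply0, rotL_apply1]; linear_combination (x 0) * h
  · show s * (rotL c (-s) x 0) + c * (rotL c (-s) x 1) = x 1
    rw [rotL_apply0, rotL_apply1]; linear_combination (x 1) * h
  · rfl

lemma inner_rotL (c s : ℝ) (h : c ^ 2 + s ^ 2 = 1) (x y : E₃) :
    ⟪rotL c s x, rotL c s y⟫ = ⟪x, y⟫ := by
  simp only [PiLp.inner_apply, RCLike.inner_apply, conj_trivial, Fin.sum_univ_three]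
  show (c * y 0 - s * y 1) * (c * x 0 - s * x 1) + (s * y 0 + c * y 1) * (s * x 0 + c * x 1)
      + y 2 * x 2 = _
  linear_combination (x 0 * y 0 + x 1 * y 1) * h

/-- rotation by (c,s) in the first two coordinates, as a linear isometry equivalence. -/
noncomputable def rotE (c s : ℝ) (h : c ^ 2 + s ^ 2 = 1) : E₃ ≃ₗᵢ[ℝ] E₃ :=
  LinearEquiv.isometryOfInner
    (LinearEquiv.ofLinear (rotL c s) (rotL c (-s))
      (by ext x; exact congrFun (congrArg WithLp.ofLp (rotL_rotL c s h x)) _)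
      (by
        ext x
        have := rotL_rotL c (-s) (by linarith [h]) x
        simpa using congrFun (congrArg WithLp.ofLp this) _))
    (inner_rotL c s h)

lemma rotE_apply (c s : ℝ) (h : c ^ 2 + s ^ 2 = 1) (x : E₃) :
    rotE c s h x = rotL c s x := rfl

/-- the complex linear form `x ↦ ⟪u,x⟫ + i ⟪v,x⟫`. -/
noncomputable def LC (u v : E₃) : E₃ →L[ℝ] ℂ :=
  Complex.ofRealCLM.comp (innerSL ℝ u) + Complex.I • Complex.ofRealCLM.comp (innerSL ℝ v)

lemma LC_apply (u v x : E₃) : LC u v x = (⟪u, x⟫ : ℂ) + Complex.I * (⟪v, x⟫ : ℝ) := by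
  simp [LC, ContinuousLinearMap.smul_apply, smul_eq_mul]

lemma hasFDerivAt_polyLC (T : E₃ →L[ℝ] ℂ) (P : Polynomial ℂ) (y : E₃) :
    HasFDerivAt (fun z => P.eval (T z)) (P.derivative.eval (T y) • (T : E₃ →L[ℝ] ℂ)) y :=
  (P.hasDerivAt (T y)).comp_hasFDerivAt y (T.hasFDerivAt)

lemma lap_polyLC (ρ : ℂ →L[ℝ] ℝ) (T : E₃ →L[ℝ] ℂ)
    (hT : ∑ i : Fin 3, (T (EuclideanSpace.single i 1)) ^ 2 = 0)
    (P : Polynomial ℂ) (x : E₃) :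
    lap (fun y => ρ (P.eval (T y))) x = 0 := by
  have step1 : ∀ (Q : Polynomial ℂ) (y : E₃) (e : E₃),
      fderiv ℝ (fun z => ρ (Q.eval (T z))) y e = ρ (Q.derivative.eval (T y) * T e) := by
    intro Q y e
    have h1 : HasFDerivAt (fun z => ρ (Q.eval (T z)))
        (ρ.comp (Q.derivative.eval (T y) • (T : E₃ →L[ℝ] ℂ))) y :=
      ρ.hasFDerivAt.comp y (hasFDerivAt_polyLC T Q y)
    rw [h1.fderiv]
    simp [smul_eq_mul]
  have step2 : ∀ (e : E₃),
      fderiv ℝ (fun y => fderiv ℝ (fun z => ρ (P.eval (T z))) y (e)) x e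
        = ρ (P.derivative.derivative.eval (T x) * T e * T e) := by
    intro e
    have hfun : (fun y => fderiv ℝ (fun z => ρ (P.eval (T z))) y e)
        = fun y => (ρ.comp (T e • ContinuousLinearMap.id ℝ ℂ)) (P.derivative.eval (T y)) := by
      funext y
      rw [step1]
      simp [mul_comm]
    rw [hfun]
    have h2 : HasFDerivAt
        (fun y => (ρ.comp (T e • ContinuousLinearMap.id ℝ ℂ)) (P.derivative.eval (T y)))
        ((ρ.comp (T e • ContinuousLinearMap.id ℝ ℂ)).comp
          (P.derivative.derivative.eval (T x) • (T : E₃ →L[ℝ] ℂ))) x :=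
      (ρ.comp (T e • ContinuousLinearMap.id ℝ ℂ)).hasFDerivAt.comp x
        (hasFDerivAt_polyLC T P.derivative x)
    rw [h2.fderiv]
    simp [smul_eq_mul]
    ring_nf
  unfold lap
  have hterm : ∀ i : Fin 3,
      fderiv ℝ (fun y => fderiv ℝ (fun z => ρ (P.eval (T z))) y (EuclideanSpace.single i 1)) x
        (EuclideanSpace.single i 1)
      = ρ (P.derivative.derivative.eval (T x) * (T (EuclideanSpace.single i 1)) ^ 2) := by
    intro i
    rw [step2]
    ring_nf
  rw [Finset.sum_congr rfl fun i _ => hterm i, ← map_sum, ← Finset.mul_sum, hT, mul_zero,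
    map_zero]

lemma LC_rot (b : OrthonormalBasis (Fin 3) ℝ E₃) (c s : ℝ) (h : c ^ 2 + s ^ 2 = 1) (x : E₃) :
    LC (b 0) (b 1) (b.repr.symm (rotE c s h (b.repr x)))
      = (c + s * Complex.I) * LC (b 0) (b 1) x := by
  have hco : ∀ (z : E₃) (i : Fin 3), (⟪b i, z⟫ : ℝ) = b.repr z i := fun z i =>
    (b.repr_apply_apply z i).symm
  rw [LC_apply, LC_apply, hco, hco, hco, hco,
    LinearIsometryEquiv.apply_symm_apply, rotE_apply, rotL_apply0, rotL_apply1]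
  push_cast
  ring_nf
  rw [Complex.I_sq]
  ring

lemma moment_zero (b : OrthonormalBasis (Fin 3) ℝ E₃) (k : ℕ) (hk : k ≠ 0) (r : ℝ) :
    ∫ x in ball (0 : E₃) r, (LC (b 0) (b 1) x) ^ k = 0 := by
  set θ := Real.pi / k with hθ
  have hcs : Real.cos θ ^ 2 + Real.sin θ ^ 2 = 1 := Real.cos_sq_add_sin_sq θ
  set R : E₃ ≃ₗᵢ[ℝ] E₃ :=
    (b.repr.trans (rotE (Real.cos θ) (Real.sin θ) hcs)).trans b.repr.symm with hR
  have hRx : ∀ x, R x = b.repr.symm (rotE (Real.cos θ) (Real.sin θ) hcs (b.repr x)) :=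
    fun x => rfl
  have hmp : MeasurePreserving R (volume : Measure E₃) volume := R.measurePreserving
  have hemb : MeasurableEmbedding R := R.toHomeomorph.measurableEmbedding
  have himg : R '' ball (0 : E₃) r = ball (0 : E₃) r := by
    have := R.toIsometryEquiv.image_ball (0 : E₃) r
    rwa [show R.toIsometryEquiv 0 = 0 from map_zero R] at this
  set M := ∫ x in ball (0 : E₃) r, (LC (b 0) (b 1) x) ^ k with hM
  set ζ : ℂ := Real.cos θ + Real.sin θ * Complex.I with hζ
  have key : M = ζ ^ k * M := by
    conv_lhs => rw [hM, ← himg, hmp.setIntegral_image_emb hemb]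
    have hpt : ∀ x, (LC (b 0) (b 1) (R x)) ^ k = ζ ^ k * (LC (b 0) (b 1) x) ^ k := by
      intro x
      rw [hRx, LC_rot b _ _ hcs x, mul_pow]
    simp_rw [hpt]
    rw [integral_const_mul]
  have hζk : ζ ^ k = -1 := by
    have h1 : ζ = Complex.exp (θ * Complex.I) := by
      rw [Complex.exp_mul_I, ← Complex.ofReal_cos, ← Complex.ofReal_sin]
    rw [h1, ← Complex.exp_nat_mul]
    have h2 : (k : ℂ) * (θ * Complex.I) = Real.pi * Complex.I := by
      have hkθ : (k : ℝ) * θ = Real.pi := by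
        rw [hθ]; field_simp
      push_cast [← hkθ]
      ring
    rw [h2, Complex.exp_pi_mul_I]
  rw [hζk, neg_one_mul] at key
  have h2 : (2 : ℂ) * M = 0 := by linear_combination key
  simpa using h2

lemma integrableOn_cont {G : Type*} [NormedAddCommGroup G] {F : E₃ → G} (hF : Continuous F)
    (z : E₃) (r : ℝ) : IntegrableOn F (ball z r) volume :=
  (hF.continuousOn.integrableOn_compact (isCompact_closedBall z r)).mono_set
    ball_subset_closedBall

lemma ball_avg (b : OrthonormalBasis (Fin 3) ℝ E₃) (P : Polynomial ℂ) (z : E₃) (r : ℝ) :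
    ∫ x in ball z r, P.eval (LC (b 0) (b 1) x)
      = ((volume (ball (0 : E₃) r)).toReal : ℂ) * P.eval (LC (b 0) (b 1) z) := by
  set T := LC (b 0) (b 1) with hT
  have hmp : MeasurePreserving (fun x : E₃ => z + x) volume volume :=
    measurePreserving_add_left volume z
  have hemb : MeasurableEmbedding (fun x : E₃ => z + x) :=
    (Homeomorph.addLeft z).measurableEmbedding
  have himg : (fun x : E₃ => z + x) '' ball (0 : E₃) r = ball z r := by
    rw [Set.image_add_left]
    ext w
    simp [mem_ball, dist_eq_norm, neg_add_eq_sub, norm_sub_rev]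
  rw [← himg, hmp.setIntegral_image_emb hemb]
  have hTzx : ∀ x, T (z + x) = T z + T x := fun x => map_add T z x
  set Q := P.comp (Polynomial.C (T z) + Polynomial.X) with hQ
  have hQx : ∀ x : E₃, P.eval (T (z + x)) = Q.eval (T x) := by
    intro x
    rw [hQ, Polynomial.eval_comp]
    simp [hTzx]
  simp_rw [hQx]
  have hexp : ∀ w : ℂ, Q.eval w = ∑ k ∈ Finset.range (Q.natDegree + 1), Q.coeff k * w ^ k :=
    fun w => Polynomial.eval_eq_sum_range w
  simp_rw [hexp]
  rw [integral_finset_sum]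
  · have hterm : ∀ k ∈ Finset.range (Q.natDegree + 1),
        (∫ x in ball (0 : E₃) r, Q.coeff k * (T x) ^ k)
          = if k = 0 then ((volume (ball (0 : E₃) r)).toReal : ℂ) * Q.coeff 0 else 0 := by
      intro k _
      rcases eq_or_ne k 0 with rfl | hk
      · simp only [pow_zero, if_pos rfl]
        rw [integral_const]
        rw [measureReal_def, Measure.restrict_apply MeasurableSet.univ, Set.univ_inter,
          Complex.real_smul, mul_one, if_true]
      · rw [if_neg hk, integral_const_mul, hT, moment_zero b k hk, mul_zero]
    rw [Finset.sum_congr rfl hterm, Finset.sum_ite_eq' (Finset.range (Q.natDegree + 1)) 0]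
    have h0 : (0 : ℕ) ∈ Finset.range (Q.natDegree + 1) := Finset.mem_range.2 (Nat.succ_pos _)
    rw [if_pos h0]
    congr 1
    rw [Polynomial.coeff_zero_eq_eval_zero, hQ, Polynomial.eval_comp]
    simp
  · intro k _
    exact (integrableOn_cont (by continuity) 0 r)

lemma omega_decomp {m n : ℕ} (xs : Fin m → E₃) (ys : Fin n → E₃) (rs : Fin m → ℝ)
    (ss : Fin n → ℝ)
    (hdisjx : ∀ p q, p ≠ q → Disjoint (ball (xs p) (rs p)) (ball (xs q) (rs q)))
    (hdisjy : ∀ p q, p ≠ q → Disjoint (ball (ys p) (ss p)) (ball (ys q) (ss q)))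
    (hhole : ∀ l, ∃ p, closedBall (ys l) (ss l) ⊆ ball (xs p) (rs p))
    (F : E₃ → ℂ) (hF : Continuous F) :
    ∫ x in (⋃ p, ball (xs p) (rs p)) \ (⋃ l, closedBall (ys l) (ss l)), F x
      = (∑ p, ∫ x in ball (xs p) (rs p), F x) - ∑ l, ∫ x in ball (ys l) (ss l), F x := by
  set U := ⋃ p, ball (xs p) (rs p) with hU
  set H := ⋃ l, closedBall (ys l) (ss l) with hH
  set H' := ⋃ l, ball (ys l) (ss l) with hH'
  have hHU : H ⊆ U := by
    rw [hH, hU]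
    refine Set.iUnion_subset fun l => ?_
    obtain ⟨p, hp⟩ := hhole l
    exact hp.trans (Set.subset_iUnion (fun p => ball (xs p) (rs p)) p)
  have hUmeas : MeasurableSet U := MeasurableSet.iUnion fun p => measurableSet_ball
  have hHmeas : MeasurableSet H := MeasurableSet.iUnion fun l => measurableSet_closedBall
  have hUint : IntegrableOn F U volume :=
    integrableOn_finite_iUnion.2 fun p => integrableOn_cont hF _ _
  have hHint : IntegrableOn F H volume := by
    refine integrableOn_finite_iUnion.2 fun l => ?_
    exact (hF.continuousOn.integrableOn_compact (isCompact_closedBall _ _))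
  have hsplit : ∫ x in U, F x = (∫ x in U \ H, F x) + ∫ x in H, F x := by
    rw [← setIntegral_union disjoint_sdiff_self_left hHmeas (hUint.mono_set Set.diff_subset)
      hHint, Set.diff_union_of_subset hHU]
  have hUsum : ∫ x in U, F x = ∑ p, ∫ x in ball (xs p) (rs p), F x := by
    rw [hU]
    exact integral_iUnion_fintype (fun p => measurableSet_ball)
      (fun p q hpq => hdisjx p q hpq) (fun p => integrableOn_cont hF _ _)
  have hHH' : H =ᵐ[volume] H' := by
    rw [MeasureTheory.ae_eq_set]
    constructor
    · refine measure_mono_null (fun z hz => ?_)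
        (measure_iUnion_null fun l => Measure.addHaar_sphere volume (ys l) (ss l))
      obtain ⟨hzH, hzH'⟩ := hz
      rw [hH, Set.mem_iUnion] at hzH
      obtain ⟨l, hl⟩ := hzH
      rw [hH'] at hzH'
      have hnb : z ∉ ball (ys l) (ss l) := fun h => hzH' (Set.mem_iUnion.2 ⟨l, h⟩)
      refine Set.mem_iUnion.2 ⟨l, ?_⟩
      rw [mem_closedBall] at hl
      rw [mem_sphere]
      rcases lt_or_eq_of_le hl with h | h
      · exact absurd (mem_ball.2 h) hnb
      · exact h
    · have hemp : H' \ H = ∅ :=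
        Set.diff_eq_empty.2 (Set.iUnion_mono fun l => ball_subset_closedBall)
      rw [hemp, measure_empty]
  have hHsum : ∫ x in H, F x = ∑ l, ∫ x in ball (ys l) (ss l), F x := by
    rw [setIntegral_congr_set hHH', hH']
    exact integral_iUnion_fintype (fun l => measurableSet_ball)
      (fun p q hpq => hdisjy p q hpq) (fun l => integrableOn_cont hF _ _)
  rw [← hUsum, ← hHsum, hsplit]
  ring

/-- There is a unit vector avoiding the spans of the differences of a finite set. -/
lemma exists_unit_generic (D : Finset E₃) :
    ∃ w : E₃, ‖w‖ = 1 ∧ ∀ z ∈ D, ∀ z' ∈ D, z ≠ z' →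
      z - z' ∉ Submodule.span ℝ ({w} : Set E₃) := by
  classical
  set Bad : Set E₃ := {(0 : E₃)} ∪ ⋃ z ∈ D, ⋃ z' ∈ D, ⋃ (_ : z ≠ z'),
      (Submodule.span ℝ ({z - z'} : Set E₃) : Set E₃) with hBad
  have hnull : volume Bad = 0 := by
    rw [hBad]
    refine le_antisymm (le_trans (measure_union_le _ _) ?_) zero_le
    have h1 : volume ({(0 : E₃)} : Set E₃) = 0 := measure_singleton _
    have h2 : volume (⋃ z ∈ D, ⋃ z' ∈ D, ⋃ (_ : z ≠ z'),
        (Submodule.span ℝ ({z - z'} : Set E₃) : Set E₃)) = 0 := by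
      refine measure_biUnion_null_iff D.countable_toSet |>.2 fun z _ => ?_
      refine measure_biUnion_null_iff D.countable_toSet |>.2 fun z' _ => ?_
      refine measure_iUnion_null fun hne => ?_
      refine Measure.addHaar_submodule volume _ fun htop => ?_
      have h3 : Module.finrank ℝ (EuclideanSpace ℝ (Fin 3)) = 1 := by
        conv_lhs => rw [← finrank_top ℝ (EuclideanSpace ℝ (Fin 3)), ← htop]
        exact finrank_span_singleton (sub_ne_zero.2 hne)
      rw [finrank_euclideanSpace_fin] at h3
      norm_num at h3
    simp [h1, h2]
  have hne : Bad ≠ Set.univ := by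
    intro h
    have h0 : volume (Set.univ : Set E₃) = 0 := h ▸ hnull
    have hb : volume (ball (0 : E₃) 1) ≤ 0 := h0 ▸ measure_mono (Set.subset_univ _)
    have := measure_ball_pos volume (0 : E₃) one_pos
    exact absurd (le_antisymm hb zero_le) this.ne'
  obtain ⟨w₀, hw₀⟩ : ∃ w₀ : E₃, w₀ ∉ Bad := by
    by_contra hc
    push_neg at hc
    exact hne (Set.eq_univ_of_forall hc)
  have hw₀ne : w₀ ≠ 0 := fun h => hw₀ (by rw [hBad, h]; exact Set.mem_union_left _ rfl)
  refine ⟨‖w₀‖⁻¹ • w₀, ?_, ?_⟩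
  · rw [norm_smul, norm_inv, norm_norm, inv_mul_cancel₀ (norm_ne_zero_iff.2 hw₀ne)]
  · intro z hz z' hz' hne' hmem
    have hd : z - z' ≠ 0 := sub_ne_zero.2 hne'
    obtain ⟨a, ha⟩ := Submodule.mem_span_singleton.1 hmem
    have ha' : a ≠ 0 := by
      rintro rfl
      simp at ha
      exact hd ha.symm
    apply hw₀
    rw [hBad]
    refine Set.mem_union_right _ ?_
    refine Set.mem_biUnion hz (Set.mem_biUnion hz' (Set.mem_iUnion.2 ⟨hne', ?_⟩))
    have hn0 : ‖w₀‖ ≠ 0 := norm_ne_zero_iff.2 hw₀ne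
    have hcoef : w₀ = (‖w₀‖ * a⁻¹) • (z - z') := by
      rw [← ha, smul_smul, smul_smul]
      have h1 : ‖w₀‖ * a⁻¹ * a * ‖w₀‖⁻¹ = 1 := by field_simp
      rw [h1, one_smul]
    rw [hcoef]
    exact Submodule.smul_mem _ _ (Submodule.mem_span_singleton_self _)

noncomputable def Vol (r : ℝ) : ℝ := (volume (ball (0 : E₃) r)).toReal

lemma Vol_pos {r : ℝ} (hr : 0 < r) : 0 < Vol r :=
  ENNReal.toReal_pos (measure_ball_pos volume (0 : E₃) hr).ne' measure_ball_lt_top.ne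

lemma Vol_inj {r r' : ℝ} (hr : 0 < r) (hr' : 0 < r') (h : Vol r = Vol r') : r = r' := by
  have h3 : ∀ t : ℝ, 0 < t → Vol t = t ^ 3 * Vol 1 := by
    intro t ht
    simp only [Vol]
    rw [Measure.addHaar_ball volume (0 : E₃) ht.le, finrank_euclideanSpace_fin,
      ENNReal.toReal_mul, ENNReal.toReal_ofReal (by positivity)]
  rw [h3 r hr, h3 r' hr'] at h
  have h1 : 0 < Vol 1 := Vol_pos one_pos
  have hcube : r ^ 3 = r' ^ 3 := by
    rcases mul_eq_mul_right_iff.mp h with h | h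
    · exact h
    · exact absurd h h1.ne'
  rcases lt_trichotomy r r' with hlt | heq | hgt
  · exact absurd hcube (pow_lt_pow_left₀ hlt hr.le (by norm_num)).ne
  · exact heq
  · exact absurd hcube.symm (pow_lt_pow_left₀ hgt hr'.le (by norm_num)).ne

/-- basis with prescribed third vector. -/
lemma exists_basis_third (w : E₃) (hw : ‖w‖ = 1) :
    ∃ b : OrthonormalBasis (Fin 3) ℝ E₃, b 2 = w := by
  have hcard : Module.finrank ℝ E₃ = Fintype.card (Fin 3) := by
    rw [finrank_euclideanSpace_fin, Fintype.card_fin]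
  have horth : Orthonormal ℝ (Set.restrict ({2} : Set (Fin 3)) (fun _ : Fin 3 => w)) := by
    constructor
    · intro i; exact hw
    · intro i j hij
      exact absurd (Subtype.ext (i.2.trans j.2.symm)) hij
  obtain ⟨b, hb⟩ := horth.exists_orthonormalBasis_extension_of_card_eq hcard
  exact ⟨b, hb 2 rfl⟩

lemma LC_inj (b : OrthonormalBasis (Fin 3) ℝ E₃) (z z' : E₃)
    (hgen : z - z' ∉ Submodule.span ℝ ({b 2} : Set E₃) ∨ z = z')
    (h : LC (b 0) (b 1) z = LC (b 0) (b 1) z') : z = z' := by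
  rcases hgen with hgen | rfl
  · exfalso
    apply hgen
    rw [LC_apply, LC_apply] at h
    have keyre : ∀ a c : ℝ, ((a : ℂ) + Complex.I * (c : ℝ)).re = a := by
      intro a c; simp
    have keyim : ∀ a c : ℝ, ((a : ℂ) + Complex.I * (c : ℝ)).im = c := by
      intro a c; simp
    have hre := congrArg Complex.re h
    have him := congrArg Complex.im h
    rw [keyre, keyre] at hre
    rw [keyim, keyim] at him
    have h0 : ⟪b 0, z - z'⟫ = 0 := by rw [inner_sub_right, hre, sub_self]
    have h1 : ⟪b 1, z - z'⟫ = 0 := by rw [inner_sub_right, him, sub_self]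
    have hrepr := b.sum_repr (z - z')
    rw [Fin.sum_univ_three] at hrepr
    rw [b.repr_apply_apply, b.repr_apply_apply, h0, h1, zero_smul, zero_smul, zero_add,
      zero_add] at hrepr
    rw [← hrepr]
    exact Submodule.smul_mem _ _ (Submodule.mem_span_singleton_self _)
  · rfl

/-- The combinatorial matching lemma. -/
lemma exists_match {n k : ℕ} (z : E₃) (w : ℝ) (hw : 0 < w)
    (g : Fin n → E₃) (h : Fin k → E₃) (wg : Fin n → ℝ) (wh : Fin k → ℝ)
    (hwh : ∀ i, 0 < wh i)
    (hginj : Function.Injective g) (hgh : ∀ i j, g i ≠ h j)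
    (key : w = (∑ q, if g q = z then wg q else 0) - ∑ l, if h l = z then wh l else 0) :
    ∃ q, g q = z ∧ wg q = w := by
  have hBnn : (0 : ℝ) ≤ ∑ l, if h l = z then wh l else 0 :=
    Finset.sum_nonneg fun l _ => by split <;> [exact (hwh l).le; rfl]
  obtain ⟨q, hq⟩ : ∃ q, g q = z := by
    by_contra hc
    push_neg at hc
    have hA : (∑ q, if g q = z then wg q else 0) = 0 :=
      Finset.sum_eq_zero fun q _ => if_neg (hc q)
    rw [hA, zero_sub] at key
    linarith
  have hB : (∑ l, if h l = z then wh l else 0) = 0 :=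
    Finset.sum_eq_zero fun l _ => if_neg (fun hl => hgh q l (hq.trans hl.symm))
  have hA : (∑ q', if g q' = z then wg q' else 0) = wg q := by
    rw [Finset.sum_eq_single q]
    · rw [if_pos hq]
    · intro q' _ hq'
      exact if_neg fun hz => hq' (hginj (hz.trans hq.symm))
    · intro hq'; exact absurd (Finset.mem_univ q) hq'
  exact ⟨q, hq, by rw [key, hA, hB, sub_zero]⟩

/-- evaluation of a weighted sum against the separating polynomial. -/
lemma sum_eval {m : ℕ} (T : E₃ → ℂ) (D : Finset E₃) (Tinj : Set.InjOn T D)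
    (z₀ : E₃) (hz₀ : z₀ ∈ D) (f : Fin m → E₃) (hf : ∀ p, f p ∈ D) (wf : Fin m → ℝ) :
    ∑ p, (wf p : ℂ) * (∏ ζ ∈ (D.image T).erase (T z₀),
        (Polynomial.X - Polynomial.C ζ)).eval (T (f p))
      = ((∑ p, if f p = z₀ then wf p else 0 : ℝ) : ℂ)
        * (∏ ζ ∈ (D.image T).erase (T z₀), (Polynomial.X - Polynomial.C ζ)).eval (T z₀) := by
  classical
  set P := ∏ ζ ∈ (D.image T).erase (T z₀), (Polynomial.X - Polynomial.C ζ) with hP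
  push_cast [apply_ite (fun t : ℝ => (t : ℂ))]
  rw [Finset.sum_mul]
  refine Finset.sum_congr rfl fun p _ => ?_
  by_cases hp : f p = z₀
  · rw [if_pos hp, hp]
  · rw [if_neg hp, zero_mul]
    have hmem : T (f p) ∈ (D.image T).erase (T z₀) :=
      Finset.mem_erase.2 ⟨fun heq => hp (Tinj (hf p) hz₀ heq), Finset.mem_image_of_mem T (hf p)⟩
    have : P.eval (T (f p)) = 0 := by
      rw [hP, Polynomial.eval_prod]
      exact Finset.prod_eq_zero hmem (by simp)
    rw [this, mul_zero]

lemma eval_sep_ne_zero (T : E₃ → ℂ) (D : Finset E₃) (z₀ : E₃) :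
    (∏ ζ ∈ (D.image T).erase (T z₀), (Polynomial.X - Polynomial.C ζ)).eval (T z₀) ≠ 0 := by
  classical
  rw [Polynomial.eval_prod]
  refine Finset.prod_ne_zero_iff.2 fun ζ hζ => ?_
  simp only [Polynomial.eval_sub, Polynomial.eval_X, Polynomial.eval_C]
  exact sub_ne_zero.2 (Ne.symm (Finset.mem_erase.1 hζ).1)

end SpeedDetAux


section MainProof
open Complex
open scoped RealInnerProductSpace

set_option maxHeartbeats 2000000 in
/-- Determination of a piecewise constant sound speed with value `b₁ ≠ b₀`
over an inclusion `ω` which is a union of disjoint balls minus disjoint closed holes (each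
hole contained in one of the balls), from the orthogonality relation
`∫_{B(0,R₀)} (c₁⁻² - c₂⁻²) φ = 0` against all harmonic test functions: the two
configurations agree up to bijections, whence `ω¹ = ω²` and `c₁ = c₂`. -/
theorem speed_determination_balls_with_holes
    (R₀ b₀ b₁ : ℝ) (hR₀ : 0 < R₀) (hb₀ : 0 < b₀) (hb₁ : 0 < b₁) (hb₁ne : b₁ ≠ b₀)
    (m₁ m₂ n₁ n₂ : ℕ)
    (x₁ : Fin m₁ → EuclideanSpace ℝ (Fin 3)) (x₂ : Fin m₂ → EuclideanSpace ℝ (Fin 3))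
    (y₁ : Fin n₁ → EuclideanSpace ℝ (Fin 3)) (y₂ : Fin n₂ → EuclideanSpace ℝ (Fin 3))
    (r₁ : Fin m₁ → ℝ) (r₂ : Fin m₂ → ℝ) (s₁ : Fin n₁ → ℝ) (s₂ : Fin n₂ → ℝ)
    (hr₁ : ∀ p, 0 < r₁ p) (hr₂ : ∀ p, 0 < r₂ p)
    (hs₁ : ∀ l, 0 < s₁ l) (hs₂ : ∀ l, 0 < s₂ l)
    -- the m_j + n_j points are pairwise distinct
    (hinjx₁ : Function.Injective x₁) (hinjx₂ : Function.Injective x₂)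
    (hinjy₁ : Function.Injective y₁) (hinjy₂ : Function.Injective y₂)
    (hxy₁ : ∀ p l, x₁ p ≠ y₁ l) (hxy₂ : ∀ p l, x₂ p ≠ y₂ l)
    -- the balls B(x_p, r_p) are pairwise disjoint with closures in B(0, R₀)
    (hsub₁ : ∀ p, closedBall (x₁ p) (r₁ p) ⊆ ball (0 : EuclideanSpace ℝ (Fin 3)) R₀)
    (hsub₂ : ∀ p, closedBall (x₂ p) (r₂ p) ⊆ ball (0 : EuclideanSpace ℝ (Fin 3)) R₀)
    (hdisjx₁ : ∀ p q, p ≠ q → Disjoint (ball (x₁ p) (r₁ p)) (ball (x₁ q) (r₁ q)))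
    (hdisjx₂ : ∀ p q, p ≠ q → Disjoint (ball (x₂ p) (r₂ p)) (ball (x₂ q) (r₂ q)))
    -- the balls B(y_l, s_l) are pairwise disjoint
    (hdisjy₁ : ∀ p q, p ≠ q → Disjoint (ball (y₁ p) (s₁ p)) (ball (y₁ q) (s₁ q)))
    (hdisjy₂ : ∀ p q, p ≠ q → Disjoint (ball (y₂ p) (s₂ p)) (ball (y₂ q) (s₂ q)))
    -- each closed hole lies in one of the balls
    (hhole₁ : ∀ l, ∃ p, closedBall (y₁ l) (s₁ l) ⊆ ball (x₁ p) (r₁ p))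
    (hhole₂ : ∀ l, ∃ p, closedBall (y₂ l) (s₂ l) ⊆ ball (x₂ p) (r₂ p))
    (ω₁ ω₂ : Set (EuclideanSpace ℝ (Fin 3)))
    (hω₁ : ω₁ = (⋃ p, ball (x₁ p) (r₁ p)) \ (⋃ l, closedBall (y₁ l) (s₁ l)))
    (hω₂ : ω₂ = (⋃ p, ball (x₂ p) (r₂ p)) \ (⋃ l, closedBall (y₂ l) (s₂ l)))
    (c₁ c₂ : EuclideanSpace ℝ (Fin 3) → ℝ)
    (hc₁ : c₁ = fun z => b₀ + (b₁ - b₀) * Set.indicator ω₁ (fun _ => (1 : ℝ)) z)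
    (hc₂ : c₂ = fun z => b₀ + (b₁ - b₀) * Set.indicator ω₂ (fun _ => (1 : ℝ)) z)
    (h : ∀ φ : EuclideanSpace ℝ (Fin 3) → ℝ,
        ContDiffOn ℝ 2 φ (ball (0 : EuclideanSpace ℝ (Fin 3)) R₀) →
        (∀ z ∈ ball (0 : EuclideanSpace ℝ (Fin 3)) R₀, lap φ z = 0) →
        ∫ z in ball (0 : EuclideanSpace ℝ (Fin 3)) R₀,
          (((c₁ z) ^ 2)⁻¹ - ((c₂ z) ^ 2)⁻¹) * φ z = 0) :
    m₁ = m₂ ∧ n₁ = n₂ ∧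
      (∃ σ₁ : Fin m₁ ≃ Fin m₂, ∀ p, x₁ p = x₂ (σ₁ p) ∧ r₁ p = r₂ (σ₁ p)) ∧
      (∃ σ₂ : Fin n₁ ≃ Fin n₂, ∀ l, y₁ l = y₂ (σ₂ l) ∧ s₁ l = s₂ (σ₂ l)) ∧
      ω₁ = ω₂ ∧ c₁ = c₂ := by
  
  -- the finite set of all centers
  set D : Finset (EuclideanSpace ℝ (Fin 3)) :=
    ((Finset.univ.image x₁ ∪ Finset.univ.image y₁) ∪ Finset.univ.image x₂)
      ∪ Finset.univ.image y₂ with hD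
  have hx₁D : ∀ p, x₁ p ∈ D := fun p => by
    simp [hD, Finset.mem_union, Finset.mem_image]
  have hy₁D : ∀ l, y₁ l ∈ D := fun l => by
    simp [hD, Finset.mem_union, Finset.mem_image]
  have hx₂D : ∀ p, x₂ p ∈ D := fun p => by
    simp [hD, Finset.mem_union, Finset.mem_image]
  have hy₂D : ∀ l, y₂ l ∈ D := fun l => by
    simp [hD, Finset.mem_union, Finset.mem_image]
  obtain ⟨w, hw1, hwgen⟩ := exists_unit_generic D
  obtain ⟨b, hb2⟩ := exists_basis_third w hw1
  set T : EuclideanSpace ℝ (Fin 3) →L[ℝ] ℂ := LC (b 0) (b 1) with hTdef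
  have Tinj : Set.InjOn (⇑T) D := by
    intro z hz z' hz' heq
    refine LC_inj b z z' ?_ heq
    by_cases hzz : z = z'
    · exact Or.inr hzz
    · exact Or.inl (by rw [hb2]; exact hwgen z hz z' hz' hzz)
  -- sum of squares of T on basis vanishes
  have hTi : ∀ (u : EuclideanSpace ℝ (Fin 3)) (i : Fin 3),
      ⟪u, EuclideanSpace.single i (1 : ℝ)⟫ = u i := by
    intro u i
    rw [EuclideanSpace.inner_single_right]
    simp
  have hip : ∀ u v : EuclideanSpace ℝ (Fin 3), ⟪u, v⟫ = ∑ i, u i * v i := by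
    intro u v
    simp [PiLp.inner_apply, RCLike.inner_apply, mul_comm]
  have hbnorm : ∀ i : Fin 3, ⟪b i, b i⟫ = 1 := fun i => by
    rw [real_inner_self_eq_norm_mul_norm, b.orthonormal.1 i, one_mul]
  have hb01 : ⟪b 0, b 1⟫ = 0 := b.orthonormal.2 (by decide)
  have hTsum : ∑ i : Fin 3, (T (EuclideanSpace.single i 1)) ^ 2 = 0 := by
    have hTsingle : ∀ i : Fin 3,
        T (EuclideanSpace.single i 1) = ((b 0 i : ℝ) : ℂ) + Complex.I * ((b 1 i : ℝ) : ℂ) := by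
      intro i
      rw [hTdef, LC_apply, hTi, hTi]
    have hexp : ∀ i : Fin 3, (T (EuclideanSpace.single i 1)) ^ 2
        = (((b 0 i * b 0 i - b 1 i * b 1 i : ℝ)) : ℂ)
          + ((2 * (b 0 i * b 1 i) : ℝ) : ℂ) * Complex.I := by
      intro i
      rw [hTsingle i]
      push_cast
      ring_nf
      rw [Complex.I_sq]
      ring
    rw [Finset.sum_congr rfl fun i _ => hexp i, Finset.sum_add_distrib,
      ← Finset.sum_mul, ← Complex.ofReal_sum, ← Complex.ofReal_sum]
    have h1 : ∑ i : Fin 3, (b 0 i * b 0 i - b 1 i * b 1 i) = 0 := by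
      rw [Finset.sum_sub_distrib, ← hip, ← hip, hbnorm 0, hbnorm 1, sub_self]
    have h2 : ∑ i : Fin 3, 2 * (b 0 i * b 1 i) = 0 := by
      rw [← Finset.mul_sum, ← hip, hb01, mul_zero]
    rw [h1, h2]
    simp
  -- basic facts about ω
  have hω₁m : MeasurableSet ω₁ := by
    rw [hω₁]
    exact (MeasurableSet.iUnion fun p => measurableSet_ball).diff
      (MeasurableSet.iUnion fun l => measurableSet_closedBall)
  have hω₂m : MeasurableSet ω₂ := by
    rw [hω₂]
    exact (MeasurableSet.iUnion fun p => measurableSet_ball).diff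
      (MeasurableSet.iUnion fun l => measurableSet_closedBall)
  have hωsub₁ : ω₁ ⊆ ball (0 : EuclideanSpace ℝ (Fin 3)) R₀ := by
    rw [hω₁]
    exact Set.diff_subset.trans
      (Set.iUnion_subset fun p => ball_subset_closedBall.trans (hsub₁ p))
  have hωsub₂ : ω₂ ⊆ ball (0 : EuclideanSpace ℝ (Fin 3)) R₀ := by
    rw [hω₂]
    exact Set.diff_subset.trans
      (Set.iUnion_subset fun p => ball_subset_closedBall.trans (hsub₂ p))
  set κ : ℝ := (b₁ ^ 2)⁻¹ - (b₀ ^ 2)⁻¹ with hκdef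
  have hκ : κ ≠ 0 := by
    intro h0
    have he : (b₁ ^ 2)⁻¹ = (b₀ ^ 2)⁻¹ := by
      have := sub_eq_zero.mp (hκdef ▸ h0)
      linarith [this]
    have h2 : b₁ ^ 2 = b₀ ^ 2 := inv_inj.mp he
    exact hb₁ne (by nlinarith)
  have hptc : ∀ z, ((c₁ z) ^ 2)⁻¹ - ((c₂ z) ^ 2)⁻¹
      = κ * (Set.indicator ω₁ (fun _ => (1 : ℝ)) z - Set.indicator ω₂ (fun _ => (1 : ℝ)) z) := by
    intro z
    rw [hc₁, hc₂]
    by_cases h1 : z ∈ ω₁ <;> by_cases h2 : z ∈ ω₂ <;>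
      simp [Set.indicator_of_mem, Set.indicator_of_notMem, h1, h2, hκdef] <;> ring
  -- the main analytic step
  have main_step : ∀ φ : EuclideanSpace ℝ (Fin 3) → ℝ, Continuous φ →
      (∫ z in ball (0 : EuclideanSpace ℝ (Fin 3)) R₀,
        (((c₁ z) ^ 2)⁻¹ - ((c₂ z) ^ 2)⁻¹) * φ z) = 0 →
      ∫ z in ω₁, φ z = ∫ z in ω₂, φ z := by
    intro φ hφc hint
    have hφint : IntegrableOn φ (ball (0 : EuclideanSpace ℝ (Fin 3)) R₀) volume :=
      integrableOn_cont hφc _ _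
    have hi1 : Integrable (ω₁.indicator φ)
        (volume.restrict (ball (0 : EuclideanSpace ℝ (Fin 3)) R₀)) := hφint.indicator hω₁m
    have hi2 : Integrable (ω₂.indicator φ)
        (volume.restrict (ball (0 : EuclideanSpace ℝ (Fin 3)) R₀)) := hφint.indicator hω₂m
    have hind : ∀ z, (((c₁ z) ^ 2)⁻¹ - ((c₂ z) ^ 2)⁻¹) * φ z
        = κ * (ω₁.indicator φ z - ω₂.indicator φ z) := by
      intro z
      rw [hptc z]
      by_cases h1 : z ∈ ω₁ <;> by_cases h2 : z ∈ ω₂ <;>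
        simp [Set.indicator_of_mem, Set.indicator_of_notMem, h1, h2] <;> ring
    simp_rw [hind] at hint
    rw [integral_const_mul, integral_sub hi1 hi2] at hint
    have hsub0 := (mul_eq_zero.mp hint).resolve_left hκ
    rw [sub_eq_zero] at hsub0
    rw [setIntegral_indicator hω₁m, setIntegral_indicator hω₂m,
      Set.inter_eq_self_of_subset_right hωsub₁, Set.inter_eq_self_of_subset_right hωsub₂]
      at hsub0
    exact hsub0
  -- the key polynomial relation
  have key : ∀ P : Polynomial ℂ,
      ((∑ p, (Vol (r₁ p) : ℂ) * P.eval (T (x₁ p))) -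
        ∑ l, (Vol (s₁ l) : ℂ) * P.eval (T (y₁ l)))
      = ((∑ p, (Vol (r₂ p) : ℂ) * P.eval (T (x₂ p))) -
        ∑ l, (Vol (s₂ l) : ℂ) * P.eval (T (y₂ l))) := by
    intro P
    set F : EuclideanSpace ℝ (Fin 3) → ℂ := fun x => P.eval (T x) with hF
    have hFc : Continuous F := by
      rw [hF]
      exact P.continuous.comp T.continuous
    have hPcd : ContDiff ℂ 2 fun w : ℂ => P.eval w := by
      have hrw : (fun w : ℂ => P.eval w)
          = fun w => ∑ k ∈ Finset.range (P.natDegree + 1), P.coeff k * w ^ k :=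
        funext fun w => Polynomial.eval_eq_sum_range w
      rw [hrw]
      exact ContDiff.sum fun k _ => contDiff_const.mul (contDiff_id.pow k)
    have hFcd : ContDiff ℝ 2 F := (hPcd.restrict_scalars ℝ).comp T.contDiff
    have hφr0 := h (fun y => Complex.reCLM (F y))
      ((Complex.reCLM.contDiff.comp hFcd).contDiffOn)
      (fun z _ => lap_polyLC Complex.reCLM T hTsum P z)
    have hφi0 := h (fun y => Complex.imCLM (F y))
      ((Complex.imCLM.contDiff.comp hFcd).contDiffOn)
      (fun z _ => lap_polyLC Complex.imCLM T hTsum P z)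
    have hre := main_step _ (Complex.reCLM.continuous.comp hFc) hφr0
    have him := main_step _ (Complex.imCLM.continuous.comp hFc) hφi0
    have hFint1 : IntegrableOn F ω₁ volume :=
      (integrableOn_cont hFc 0 R₀).mono_set hωsub₁
    have hFint2 : IntegrableOn F ω₂ volume :=
      (integrableOn_cont hFc 0 R₀).mono_set hωsub₂
    have hC : ∫ z in ω₁, F z = ∫ z in ω₂, F z := by
      rw [← setIntegral_re_add_im hFint1, ← setIntegral_re_add_im hFint2]
      have hre' : ∫ z in ω₁, RCLike.re (F z) = ∫ z in ω₂, RCLike.re (F z) := by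
        simpa using hre
      have him' : ∫ z in ω₁, RCLike.im (F z) = ∫ z in ω₂, RCLike.im (F z) := by
        simpa using him
      rw [hre', him']
    have hd1 : ∫ z in ω₁, F z
        = (∑ p, (Vol (r₁ p) : ℂ) * P.eval (T (x₁ p))) -
          ∑ l, (Vol (s₁ l) : ℂ) * P.eval (T (y₁ l)) := by
      rw [hω₁, omega_decomp x₁ y₁ r₁ s₁ hdisjx₁ hdisjy₁ hhole₁ F hFc]
      congr 1
      · exact Finset.sum_congr rfl fun p _ => ball_avg b P (x₁ p) (r₁ p)
      · exact Finset.sum_congr rfl fun l _ => ball_avg b P (y₁ l) (s₁ l)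
    have hd2 : ∫ z in ω₂, F z
        = (∑ p, (Vol (r₂ p) : ℂ) * P.eval (T (x₂ p))) -
          ∑ l, (Vol (s₂ l) : ℂ) * P.eval (T (y₂ l)) := by
      rw [hω₂, omega_decomp x₂ y₂ r₂ s₂ hdisjx₂ hdisjy₂ hhole₂ F hFc]
      congr 1
      · exact Finset.sum_congr rfl fun p _ => ball_avg b P (x₂ p) (r₂ p)
      · exact Finset.sum_congr rfl fun l _ => ball_avg b P (y₂ l) (s₂ l)
    rw [hd1, hd2] at hC
    exact hC
  -- specialize to the separating polynomials
  have relation : ∀ z₀ ∈ D,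
      ((∑ p, if x₁ p = z₀ then Vol (r₁ p) else 0)
        - ∑ l, if y₁ l = z₀ then Vol (s₁ l) else 0)
      = ((∑ p, if x₂ p = z₀ then Vol (r₂ p) else 0)
        - ∑ l, if y₂ l = z₀ then Vol (s₂ l) else 0) := by
    intro z₀ hz₀
    have hk := key (∏ ζ ∈ (D.image (⇑T)).erase (T z₀), (Polynomial.X - Polynomial.C ζ))
    rw [sum_eval (⇑T) D Tinj z₀ hz₀ x₁ hx₁D (fun p => Vol (r₁ p)),
      sum_eval (⇑T) D Tinj z₀ hz₀ y₁ hy₁D (fun l => Vol (s₁ l)),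
      sum_eval (⇑T) D Tinj z₀ hz₀ x₂ hx₂D (fun p => Vol (r₂ p)),
      sum_eval (⇑T) D Tinj z₀ hz₀ y₂ hy₂D (fun l => Vol (s₂ l))] at hk
    have hc₀ := eval_sep_ne_zero (⇑T) D z₀
    have hfac : (((∑ p, if x₁ p = z₀ then Vol (r₁ p) else 0)
          - ∑ l, if y₁ l = z₀ then Vol (s₁ l) else 0 : ℝ) : ℂ)
        * (∏ ζ ∈ (D.image (⇑T)).erase (T z₀), (Polynomial.X - Polynomial.C ζ)).eval (T z₀)
        = (((∑ p, if x₂ p = z₀ then Vol (r₂ p) else 0)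
          - ∑ l, if y₂ l = z₀ then Vol (s₂ l) else 0 : ℝ) : ℂ)
        * (∏ ζ ∈ (D.image (⇑T)).erase (T z₀), (Polynomial.X - Polynomial.C ζ)).eval (T z₀) := by
      push_cast
      push_cast at hk
      linear_combination hk
    have := mul_right_cancel₀ hc₀ hfac
    exact_mod_cast this
  -- matching of the x-centers
  have hmx : ∀ p₀ : Fin m₁, ∃ q, x₂ q = x₁ p₀ ∧ r₂ q = r₁ p₀ := by
    intro p₀
    have hz := relation (x₁ p₀) (hx₁D p₀)
    have hA1 : (∑ p, if x₁ p = x₁ p₀ then Vol (r₁ p) else 0) = Vol (r₁ p₀) := by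
      rw [Finset.sum_eq_single p₀]
      · rw [if_pos rfl]
      · exact fun p _ hp => if_neg fun he => hp (hinjx₁ he)
      · exact fun hp => absurd (Finset.mem_univ p₀) hp
    have hB1 : (∑ l, if y₁ l = x₁ p₀ then Vol (s₁ l) else 0) = 0 :=
      Finset.sum_eq_zero fun l _ => if_neg fun he => hxy₁ p₀ l he.symm
    rw [hA1, hB1, sub_zero] at hz
    obtain ⟨q, hq, hv⟩ := exists_match (x₁ p₀) (Vol (r₁ p₀)) (Vol_pos (hr₁ p₀)) x₂ y₂
      (fun q => Vol (r₂ q)) (fun l => Vol (s₂ l)) (fun l => Vol_pos (hs₂ l)) hinjx₂ hxy₂ hz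
    exact ⟨q, hq, Vol_inj (hr₂ q) (hr₁ p₀) hv⟩
  have hmx' : ∀ q₀ : Fin m₂, ∃ p, x₁ p = x₂ q₀ ∧ r₁ p = r₂ q₀ := by
    intro q₀
    have hz := (relation (x₂ q₀) (hx₂D q₀)).symm
    have hA1 : (∑ p, if x₂ p = x₂ q₀ then Vol (r₂ p) else 0) = Vol (r₂ q₀) := by
      rw [Finset.sum_eq_single q₀]
      · rw [if_pos rfl]
      · exact fun p _ hp => if_neg fun he => hp (hinjx₂ he)
      · exact fun hp => absurd (Finset.mem_univ q₀) hp
    have hB1 : (∑ l, if y₂ l = x₂ q₀ then Vol (s₂ l) else 0) = 0 :=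
      Finset.sum_eq_zero fun l _ => if_neg fun he => hxy₂ q₀ l he.symm
    rw [hA1, hB1, sub_zero] at hz
    obtain ⟨p, hp, hv⟩ := exists_match (x₂ q₀) (Vol (r₂ q₀)) (Vol_pos (hr₂ q₀)) x₁ y₁
      (fun p => Vol (r₁ p)) (fun l => Vol (s₁ l)) (fun l => Vol_pos (hs₁ l)) hinjx₁ hxy₁ hz
    exact ⟨p, hp, Vol_inj (hr₁ p) (hr₂ q₀) hv⟩
  -- matching of the y-centers
  have hmy : ∀ l₀ : Fin n₁, ∃ l, y₂ l = y₁ l₀ ∧ s₂ l = s₁ l₀ := by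
    intro l₀
    have hz := relation (y₁ l₀) (hy₁D l₀)
    have hA1 : (∑ p, if x₁ p = y₁ l₀ then Vol (r₁ p) else 0) = 0 :=
      Finset.sum_eq_zero fun p _ => if_neg (hxy₁ p l₀)
    have hB1 : (∑ l, if y₁ l = y₁ l₀ then Vol (s₁ l) else 0) = Vol (s₁ l₀) := by
      rw [Finset.sum_eq_single l₀]
      · rw [if_pos rfl]
      · exact fun l _ hl => if_neg fun he => hl (hinjy₁ he)
      · exact fun hl => absurd (Finset.mem_univ l₀) hl
    rw [hA1, hB1, zero_sub] at hz
    have hz' : Vol (s₁ l₀) = (∑ l, if y₂ l = y₁ l₀ then Vol (s₂ l) else 0)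
        - ∑ p, if x₂ p = y₁ l₀ then Vol (r₂ p) else 0 := by linarith [hz]
    obtain ⟨l, hl, hv⟩ := exists_match (y₁ l₀) (Vol (s₁ l₀)) (Vol_pos (hs₁ l₀)) y₂ x₂
      (fun l => Vol (s₂ l)) (fun p => Vol (r₂ p)) (fun p => Vol_pos (hr₂ p)) hinjy₂
      (fun i j => (hxy₂ j i).symm) hz'
    exact ⟨l, hl, Vol_inj (hs₂ l) (hs₁ l₀) hv⟩
  have hmy' : ∀ l₀ : Fin n₂, ∃ l, y₁ l = y₂ l₀ ∧ s₁ l = s₂ l₀ := by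
    intro l₀
    have hz := (relation (y₂ l₀) (hy₂D l₀)).symm
    have hA1 : (∑ p, if x₂ p = y₂ l₀ then Vol (r₂ p) else 0) = 0 :=
      Finset.sum_eq_zero fun p _ => if_neg (hxy₂ p l₀)
    have hB1 : (∑ l, if y₂ l = y₂ l₀ then Vol (s₂ l) else 0) = Vol (s₂ l₀) := by
      rw [Finset.sum_eq_single l₀]
      · rw [if_pos rfl]
      · exact fun l _ hl => if_neg fun he => hl (hinjy₂ he)
      · exact fun hl => absurd (Finset.mem_univ l₀) hl
    rw [hA1, hB1, zero_sub] at hz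
    have hz' : Vol (s₂ l₀) = (∑ l, if y₁ l = y₂ l₀ then Vol (s₁ l) else 0)
        - ∑ p, if x₁ p = y₂ l₀ then Vol (r₁ p) else 0 := by linarith [hz]
    obtain ⟨l, hl, hv⟩ := exists_match (y₂ l₀) (Vol (s₂ l₀)) (Vol_pos (hs₂ l₀)) y₁ x₁
      (fun l => Vol (s₁ l)) (fun p => Vol (r₁ p)) (fun p => Vol_pos (hr₁ p)) hinjy₁
      (fun i j => (hxy₁ j i).symm) hz'
    exact ⟨l, hl, Vol_inj (hs₁ l) (hs₂ l₀) hv⟩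
  -- build the bijections
  choose σf hσ1 hσ2 using hmx
  choose τf hτ1 hτ2 using hmx'
  choose ρf hρ1 hρ2 using hmy
  choose πf hπ1 hπ2 using hmy'
  have hlinv : Function.LeftInverse τf σf := fun p => hinjx₁ (by rw [hτ1, hσ1])
  have hrinv : Function.RightInverse τf σf := fun q => hinjx₂ (by rw [hσ1, hτ1])
  have hlinv' : Function.LeftInverse πf ρf := fun l => hinjy₁ (by rw [hπ1, hρ1])
  have hrinv' : Function.RightInverse πf ρf := fun l => hinjy₂ (by rw [hρ1, hπ1])
  let e₁ : Fin m₁ ≃ Fin m₂ := ⟨σf, τf, hlinv, hrinv⟩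
  let e₂ : Fin n₁ ≃ Fin n₂ := ⟨ρf, πf, hlinv', hrinv'⟩
  have hm : m₁ = m₂ := by simpa using Fintype.card_congr e₁
  have hn : n₁ = n₂ := by simpa using Fintype.card_congr e₂
  have hUeq : (⋃ p, ball (x₁ p) (r₁ p)) = ⋃ q, ball (x₂ q) (r₂ q) := by
    have h1 : (⋃ p, ball (x₁ p) (r₁ p)) = ⋃ p, ball (x₂ (σf p)) (r₂ (σf p)) :=
      Set.iUnion_congr fun p => by rw [hσ1, hσ2]
    rw [h1]
    exact Function.Surjective.iUnion_comp (f := σf)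
      (fun q => ⟨τf q, hrinv q⟩) (fun q => ball (x₂ q) (r₂ q))
  have hHeq : (⋃ l, closedBall (y₁ l) (s₁ l)) = ⋃ l, closedBall (y₂ l) (s₂ l) := by
    have h1 : (⋃ l, closedBall (y₁ l) (s₁ l)) = ⋃ l, closedBall (y₂ (ρf l)) (s₂ (ρf l)) :=
      Set.iUnion_congr fun l => by rw [hρ1, hρ2]
    rw [h1]
    exact Function.Surjective.iUnion_comp (f := ρf)
      (fun l => ⟨πf l, hrinv' l⟩) (fun l => closedBall (y₂ l) (s₂ l))
  have hωeq : ω₁ = ω₂ := by rw [hω₁, hω₂, hUeq, hHeq]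
  refine ⟨hm, hn, ⟨e₁, fun p => ⟨(hσ1 p).symm, (hσ2 p).symm⟩⟩,
    ⟨e₂, fun l => ⟨(hρ1 l).symm, (hρ2 l).symm⟩⟩, hωeq, ?_⟩
  rw [hc₁, hc₂, hωeq]

end MainProof
end

section
/- Let q ∈ [1,∞), R₀ > 0 and M > 0. Let b₀, b¹, b² ∈ (0, M], let x¹, x² ∈ B(0,R₀) ⊂ ℝ³, let 0 < r ≤ R₀, and set c_j := b₀ + (b^j − b₀) 1_{B(x^j, r)} for j = 1,2. Then there exists a constant C > 0 depending only on q, R₀ and M such that ‖c₁ − c₂‖_{L^q(ℝ³)} ≤ C (|x¹ − x²|^{1/q} + |b¹ − b²|). -/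
open MeasureTheory Metric
open scoped ENNReal

private lemma vol_ball_diff_le (R₀ : ℝ) (hR₀ : 0 < R₀)
    (x y : EuclideanSpace ℝ (Fin 3)) (r : ℝ) (hr : 0 < r) (hrR : r ≤ R₀)
    (hd : dist x y ≤ 2 * R₀) :
    volume (ball x r \ ball y r)
      ≤ ENNReal.ofReal (27 * R₀ ^ 2) * ENNReal.ofReal (dist x y)
        * volume (ball (0 : EuclideanSpace ℝ (Fin 3)) 1) := by
  set d := dist x y with hdd
  have hd0 : 0 ≤ d := dist_nonneg
  have hsub : ball x r \ ball y r ⊆ ball y (r + d) \ ball y r := by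
    apply Set.diff_subset_diff_left
    exact ball_subset_ball' (by rw [hdd])
  refine (measure_mono hsub).trans ?_
  rw [measure_diff (ball_subset_ball (by linarith)) measurableSet_ball.nullMeasurableSet
    measure_ball_lt_top.ne]
  have h3 : Module.finrank ℝ (EuclideanSpace ℝ (Fin 3)) = 3 := by
    simp [finrank_euclideanSpace]
  rw [Measure.addHaar_ball _ _ (by linarith : (0:ℝ) ≤ r + d),
    Measure.addHaar_ball _ _ hr.le, h3]
  rw [tsub_le_iff_right, ← ENNReal.ofReal_mul (by positivity), ← add_mul,
    ← ENNReal.ofReal_add (by positivity) (by positivity)]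
  gcongr
  nlinarith [hd0, mul_le_mul hrR hrR hr.le hR₀.le, mul_le_mul hd hd hd0 (by linarith : (0:ℝ) ≤ 2 * R₀), mul_le_mul hrR hd hd0 hR₀.le]

/-- `L^q` bound comparing two single-ball piecewise constant speeds:
there is `C > 0` depending only on `q`, `R₀`, `M` such that
`‖c₁ − c₂‖_{L^q(ℝ³)} ≤ C (|x¹ − x²|^{1/q} + |b¹ − b²|)`. -/
theorem Lq_bound_single_ball_speeds
    (q : ℝ) (hq : 1 ≤ q) (R₀ M : ℝ) (hR₀ : 0 < R₀) (hM : 0 < M) :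
    ∃ C > 0, ∀ (b₀ b₁ b₂ : ℝ), 0 < b₀ → b₀ ≤ M → 0 < b₁ → b₁ ≤ M → 0 < b₂ → b₂ ≤ M →
      ∀ x₁ x₂ : EuclideanSpace ℝ (Fin 3),
        x₁ ∈ ball (0 : EuclideanSpace ℝ (Fin 3)) R₀ →
        x₂ ∈ ball (0 : EuclideanSpace ℝ (Fin 3)) R₀ →
      ∀ r : ℝ, 0 < r → r ≤ R₀ →
        eLpNorm
          (fun z => (b₀ + (b₁ - b₀) * Set.indicator (ball x₁ r) (fun _ => (1 : ℝ)) z)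
            - (b₀ + (b₂ - b₀) * Set.indicator (ball x₂ r) (fun _ => (1 : ℝ)) z))
          (ENNReal.ofReal q) volume
        ≤ ENNReal.ofReal (C * (dist x₁ x₂ ^ (1 / q) + |b₁ - b₂|)) := by
  classical
  have hq0 : 0 < q := lt_of_lt_of_le one_pos hq
  set p : ℝ≥0∞ := ENNReal.ofReal q with hp
  have hp0 : p ≠ 0 := by
    simp only [hp, ne_eq, ENNReal.ofReal_eq_zero, not_le]; linarith
  have hpt : p ≠ ⊤ := ENNReal.ofReal_ne_top
  have hptr : p.toReal = q := ENNReal.toReal_ofReal hq0.le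
  have hp1 : 1 ≤ p := by rw [hp, ENNReal.one_le_ofReal]; exact hq
  set B : ℝ≥0∞ := volume (ball (0 : EuclideanSpace ℝ (Fin 3)) 1) with hB
  have hBt : B ≠ ⊤ := measure_ball_lt_top.ne
  set A : ℝ≥0∞ := (volume (ball (0 : EuclideanSpace ℝ (Fin 3)) (2 * R₀))) ^ (1 / q) with hA
  have hAt : A ≠ ⊤ :=
    (ENNReal.rpow_lt_top_of_nonneg (by positivity) measure_ball_lt_top.ne).ne
  set K : ℝ≥0∞ := (ENNReal.ofReal (27 * R₀ ^ 2) * B) ^ (1 / q) with hK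
  have hKt : K ≠ ⊤ := by
    refine (ENNReal.rpow_lt_top_of_nonneg (by positivity) ?_).ne
    exact ENNReal.mul_ne_top ENNReal.ofReal_ne_top hBt
  refine ⟨A.toReal + 2 * M * K.toReal + 1, by positivity, ?_⟩
  intro b₀ b₁ b₂ hb₀ hb₀M hb₁ hb₁M hb₂ hb₂M x₁ x₂ hx₁ hx₂ r hr hrR
  set C : ℝ := A.toReal + 2 * M * K.toReal + 1 with hC
  have hC1 : A.toReal ≤ C := by
    have : 0 ≤ 2 * M * K.toReal := by positivity
    simp only [hC]; linarith
  have hC2 : 2 * M * K.toReal ≤ C := by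
    have : 0 ≤ A.toReal := ENNReal.toReal_nonneg
    simp only [hC]; linarith
  set d : ℝ := dist x₁ x₂ with hdd
  have hd0 : 0 ≤ d := dist_nonneg
  have hd2 : d ≤ 2 * R₀ := by
    have h1 : dist x₁ (0 : EuclideanSpace ℝ (Fin 3)) < R₀ := mem_ball.mp hx₁
    have h2 : dist x₂ (0 : EuclideanSpace ℝ (Fin 3)) < R₀ := mem_ball.mp hx₂
    have := dist_triangle_right x₁ x₂ (0 : EuclideanSpace ℝ (Fin 3))
    rw [hdd]; linarith
  set g₁ : EuclideanSpace ℝ (Fin 3) → ℝ :=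
    Set.indicator (ball x₁ r) (fun _ => b₁ - b₂) with hg₁
  set g₂ : EuclideanSpace ℝ (Fin 3) → ℝ :=
    Set.indicator (ball x₁ r \ ball x₂ r) (fun _ => b₂ - b₀) with hg₂
  set g₃ : EuclideanSpace ℝ (Fin 3) → ℝ :=
    Set.indicator (ball x₂ r \ ball x₁ r) (fun _ => b₀ - b₂) with hg₃
  have hfg : (fun z => (b₀ + (b₁ - b₀) * Set.indicator (ball x₁ r) (fun _ => (1 : ℝ)) z)
      - (b₀ + (b₂ - b₀) * Set.indicator (ball x₂ r) (fun _ => (1 : ℝ)) z))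
      = fun z => g₁ z + (g₂ z + g₃ z) := by
    funext z
    by_cases h1 : z ∈ ball x₁ r <;> by_cases h2 : z ∈ ball x₂ r <;>
      simp [hg₁, hg₂, hg₃, Set.indicator_apply, h1, h2] <;> ring
  have mg₁ : AEStronglyMeasurable g₁ volume :=
    ((measurable_const.indicator measurableSet_ball)).aestronglyMeasurable
  have mg₂ : AEStronglyMeasurable g₂ volume :=
    ((measurable_const.indicator (measurableSet_ball.diff measurableSet_ball))).aestronglyMeasurable
  have mg₃ : AEStronglyMeasurable g₃ volume :=
    ((measurable_const.indicator (measurableSet_ball.diff measurableSet_ball))).aestronglyMeasurable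
  rw [hfg]
  have htri : eLpNorm (fun z => g₁ z + (g₂ z + g₃ z)) p volume
      ≤ eLpNorm g₁ p volume + (eLpNorm g₂ p volume + eLpNorm g₃ p volume) :=
    (eLpNorm_add_le mg₁ (mg₂.add mg₃) hp1).trans
      (add_le_add_right (eLpNorm_add_le mg₂ mg₃ hp1) _)
  refine htri.trans ?_
  -- term 1
  have hterm1 : eLpNorm g₁ p volume ≤ ENNReal.ofReal (C * |b₁ - b₂|) := by
    rw [hg₁, eLpNorm_indicator_const measurableSet_ball hp0 hpt, hptr]
    have hsub : ball x₁ r ⊆ ball (0 : EuclideanSpace ℝ (Fin 3)) (2 * R₀) := by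
      apply ball_subset_ball'
      have : dist x₁ (0 : EuclideanSpace ℝ (Fin 3)) < R₀ := mem_ball.mp hx₁
      linarith
    have hvol : volume (ball x₁ r) ^ (1 / q) ≤ A := by
      rw [hA]; exact ENNReal.rpow_le_rpow (measure_mono hsub) (by positivity)
    have hAC : A ≤ ENNReal.ofReal C := by
      rw [← ENNReal.ofReal_toReal hAt]
      exact ENNReal.ofReal_le_ofReal hC1
    calc (‖b₁ - b₂‖₊ : ℝ≥0∞) * volume (ball x₁ r) ^ (1 / q)
        ≤ ENNReal.ofReal |b₁ - b₂| * ENNReal.ofReal C := by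
          rw [← Real.enorm_eq_ofReal_abs, enorm_eq_nnnorm]
          exact mul_le_mul_right (hvol.trans hAC) _
      _ = ENNReal.ofReal (C * |b₁ - b₂|) := by
          rw [← ENNReal.ofReal_mul (abs_nonneg _), mul_comm]
  -- terms 2 and 3
  have hMK : ∀ (c : ℝ), |c| ≤ M → ∀ x y : EuclideanSpace ℝ (Fin 3), dist x y ≤ 2 * R₀ →
      eLpNorm (Set.indicator (ball x r \ ball y r) (fun _ => c)) p volume
        ≤ ENNReal.ofReal M * K * ENNReal.ofReal (dist x y ^ (1 / q)) := by
    intro c hc x y hdxy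
    rw [eLpNorm_indicator_const (measurableSet_ball.diff measurableSet_ball) hp0 hpt, hptr]
    have hvol := vol_ball_diff_le R₀ hR₀ x y r hr hrR hdxy
    have hvolr : volume (ball x r \ ball y r) ^ (1 / q)
        ≤ K * ENNReal.ofReal (dist x y ^ (1 / q)) := by
      calc volume (ball x r \ ball y r) ^ (1 / q)
          ≤ (ENNReal.ofReal (27 * R₀ ^ 2) * ENNReal.ofReal (dist x y) * B) ^ (1 / q) :=
            ENNReal.rpow_le_rpow hvol (by positivity)
        _ = (ENNReal.ofReal (27 * R₀ ^ 2) * B * ENNReal.ofReal (dist x y)) ^ (1 / q) := by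
            ring_nf
        _ = K * ENNReal.ofReal (dist x y) ^ (1 / q) := by
            rw [ENNReal.mul_rpow_of_nonneg _ _ (by positivity : (0:ℝ) ≤ 1 / q), hK]
        _ = K * ENNReal.ofReal (dist x y ^ (1 / q)) := by
            rw [ENNReal.ofReal_rpow_of_nonneg dist_nonneg (by positivity)]
    calc (‖c‖₊ : ℝ≥0∞) * volume (ball x r \ ball y r) ^ (1 / q)
        ≤ ENNReal.ofReal M * (K * ENNReal.ofReal (dist x y ^ (1 / q))) := by
          refine mul_le_mul' ?_ hvolr
          rw [← enorm_eq_nnnorm, Real.enorm_eq_ofReal_abs]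
          exact ENNReal.ofReal_le_ofReal hc
      _ = ENNReal.ofReal M * K * ENNReal.ofReal (dist x y ^ (1 / q)) := (mul_assoc _ _ _).symm
  have hb20 : |b₂ - b₀| ≤ M := abs_le.mpr ⟨by linarith, by linarith⟩
  have hb02 : |b₀ - b₂| ≤ M := abs_le.mpr ⟨by linarith, by linarith⟩
  have hterm2 := hMK (b₂ - b₀) hb20 x₁ x₂ hd2
  have hterm3 := hMK (b₀ - b₂) hb02 x₂ x₁ (by rw [dist_comm]; exact hd2)
  rw [dist_comm x₂ x₁] at hterm3
  have hC0 : 0 < C := by positivity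
  have h2K : ENNReal.ofReal M * K * ENNReal.ofReal (d ^ (1 / q))
        + ENNReal.ofReal M * K * ENNReal.ofReal (d ^ (1 / q))
        ≤ ENNReal.ofReal (C * d ^ (1 / q)) := by
    have he : ENNReal.ofReal M * K * ENNReal.ofReal (d ^ (1 / q))
        + ENNReal.ofReal M * K * ENNReal.ofReal (d ^ (1 / q))
        = ENNReal.ofReal (2 * M * K.toReal * d ^ (1 / q)) := by
      have hKeq : ENNReal.ofReal (M * K.toReal) = ENNReal.ofReal M * K := by
        rw [ENNReal.ofReal_mul hM.le, ENNReal.ofReal_toReal hKt]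
      rw [← hKeq, ← ENNReal.ofReal_mul (by positivity),
        ← ENNReal.ofReal_add (by positivity) (by positivity)]
      congr 1
      ring
    rw [he]
    apply ENNReal.ofReal_le_ofReal
    have hdq : 0 ≤ d ^ (1 / q) := by positivity
    exact mul_le_mul_of_nonneg_right hC2 hdq
  have hsum23 : eLpNorm g₂ p volume + eLpNorm g₃ p volume
      ≤ ENNReal.ofReal (C * d ^ (1 / q)) :=
    (add_le_add hterm2 hterm3).trans h2K
  calc eLpNorm g₁ p volume + (eLpNorm g₂ p volume + eLpNorm g₃ p volume)
      ≤ ENNReal.ofReal (C * |b₁ - b₂|) + ENNReal.ofReal (C * d ^ (1 / q)) :=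
        add_le_add hterm1 hsum23
    _ = ENNReal.ofReal (C * (d ^ (1 / q) + |b₁ - b₂|)) := by
        rw [← ENNReal.ofReal_add (by positivity) (by positivity)]
        ring_nf
end

section
/- Let m, M, R₀ > 0 with m ≤ M, let b¹, b² ∈ [m, M], let x¹, x² ∈ B(0,R₀) ⊂ ℝ³, and let ε ≥ 0. Suppose that for every smooth function φ : ℝ³ → ℂ that is harmonic on ℝ³ one has |(b¹)^{−2} φ(x¹) − (b²)^{−2} φ(x²)| ≤ ε · sup_{x ∈ cl B(0, 2R₀)} |φ(x)|. Then there exists a constant C > 0 depending only on m, M and R₀ such that |x¹ − x²| ≤ C ε and |b¹ − b²| ≤ C ε. -/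
open MeasureTheory Metric

lemma lap_const (c : ℂ) (z : EuclideanSpace ℝ (Fin 3)) : lap (fun _ => c) z = 0 := by
  simp [lap]

lemma lap_clm (L : EuclideanSpace ℝ (Fin 3) →L[ℝ] ℂ) (z : EuclideanSpace ℝ (Fin 3)) :
    lap (fun x => L x) z = 0 := by
  simp [lap, ContinuousLinearMap.fderiv]

lemma abs_coord_le_norm (x : EuclideanSpace ℝ (Fin 3)) (i : Fin 3) : |x i| ≤ ‖x‖ := by
  rw [EuclideanSpace.norm_eq]
  calc |x i| = Real.sqrt (‖x i‖ ^ 2) := by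
        rw [Real.norm_eq_abs, Real.sqrt_sq_eq_abs, abs_abs]
    _ ≤ Real.sqrt (∑ j, ‖x j‖ ^ 2) := by
        apply Real.sqrt_le_sqrt
        exact Finset.single_le_sum (f := fun j => ‖x j‖ ^ 2) (fun j _ => by positivity)
          (Finset.mem_univ i)

/-- Quantitative stability for weighted point masses: there is `C > 0`
depending only on `m`, `M`, `R₀` such that, if
`|(b¹)⁻² φ(x¹) − (b²)⁻² φ(x²)| ≤ ε sup_{cl B(0,2R₀)} |φ|` for every smooth globally
harmonic `φ : ℝ³ → ℂ`, then `|x¹ − x²| ≤ C ε` and `|b¹ − b²| ≤ C ε`. -/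
theorem point_mass_stability
    (m M R₀ : ℝ) (hm : 0 < m) (hmM : m ≤ M) (hR₀ : 0 < R₀) :
    ∃ C > 0, ∀ (b₁ b₂ : ℝ), m ≤ b₁ → b₁ ≤ M → m ≤ b₂ → b₂ ≤ M →
      ∀ x₁ x₂ : EuclideanSpace ℝ (Fin 3),
        x₁ ∈ ball (0 : EuclideanSpace ℝ (Fin 3)) R₀ →
        x₂ ∈ ball (0 : EuclideanSpace ℝ (Fin 3)) R₀ →
      ∀ ε : ℝ, 0 ≤ ε →
        (∀ φ : EuclideanSpace ℝ (Fin 3) → ℂ, ContDiff ℝ (⊤ : ℕ∞) φ → (∀ z, lap φ z = 0) →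
          ‖(((b₁ ^ 2)⁻¹ : ℝ) : ℂ) * φ x₁ - (((b₂ ^ 2)⁻¹ : ℝ) : ℂ) * φ x₂‖ ≤
            ε * ⨆ z : closedBall (0 : EuclideanSpace ℝ (Fin 3)) (2 * R₀),
              ‖φ z‖) →
        dist x₁ x₂ ≤ C * ε ∧ |b₁ - b₂| ≤ C * ε := by
  have hM : 0 < M := lt_of_lt_of_le hm hmM
  refine ⟨6 * R₀ * M ^ 2 + M ^ 4 / (2 * m), by positivity, ?_⟩
  intro b₁ b₂ hb₁m hb₁M hb₂m hb₂M x₁ x₂ hx₁ hx₂ ε hε h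
  have hb₁ : 0 < b₁ := lt_of_lt_of_le hm hb₁m
  have hb₂ : 0 < b₂ := lt_of_lt_of_le hm hb₂m
  haveI hne : Nonempty (closedBall (0 : EuclideanSpace ℝ (Fin 3)) (2 * R₀)) :=
    (nonempty_closedBall.2 (by positivity)).to_subtype
  -- Step 1: constant test function
  have hb : |(b₁ ^ 2)⁻¹ - (b₂ ^ 2)⁻¹| ≤ ε := by
    have h1 := h (fun _ => 1) contDiff_const (fun z => lap_const 1 z)
    simp only [mul_one, ← Complex.ofReal_sub, Complex.norm_real, Real.norm_eq_abs, norm_one, ciSup_const] at h1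
    linarith
  -- Step 2: coordinate test functions
  have hcoord : ∀ i : Fin 3, |x₁ i - x₂ i| ≤ 3 * R₀ * M ^ 2 * ε := by
    intro i
    set L : EuclideanSpace ℝ (Fin 3) →L[ℝ] ℂ :=
      Complex.ofRealCLM.comp (EuclideanSpace.proj i) with hL
    have h2 := h (fun x => L x) L.contDiff (fun z => lap_clm L z)
    have hLx : ∀ x : EuclideanSpace ℝ (Fin 3), L x = ((x i : ℝ) : ℂ) := fun x => rfl
    have hsup : (⨆ z : closedBall (0 : EuclideanSpace ℝ (Fin 3)) (2 * R₀),
        ‖L z‖) ≤ 2 * R₀ := by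
      apply ciSup_le
      intro z
      rw [hLx, Complex.norm_real, Real.norm_eq_abs]
      calc |(z : EuclideanSpace ℝ (Fin 3)) i| ≤ ‖(z : EuclideanSpace ℝ (Fin 3))‖ :=
            abs_coord_le_norm _ i
        _ ≤ 2 * R₀ := by
            have := z.2
            rwa [mem_closedBall, dist_zero_right] at this
    have key : |(b₁ ^ 2)⁻¹ * x₁ i - (b₂ ^ 2)⁻¹ * x₂ i| ≤ ε * (2 * R₀) := by
      have : ‖(((b₁ ^ 2)⁻¹ : ℝ) : ℂ) * L x₁ - (((b₂ ^ 2)⁻¹ : ℝ) : ℂ) * L x₂‖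
          = |(b₁ ^ 2)⁻¹ * x₁ i - (b₂ ^ 2)⁻¹ * x₂ i| := by
        rw [hLx, hLx, ← Complex.ofReal_mul, ← Complex.ofReal_mul, ← Complex.ofReal_sub,
          Complex.norm_real, Real.norm_eq_abs]
      rw [← this]
      exact h2.trans (mul_le_mul_of_nonneg_left hsup hε)
    -- bound |x₁ i|
    have hx₁i : |x₁ i| ≤ R₀ := by
      have h1 : ‖x₁‖ ≤ R₀ := le_of_lt (by rwa [mem_ball, dist_zero_right] at hx₁)
      exact (abs_coord_le_norm x₁ i).trans h1
    have hinv : (b₂ ^ 2)⁻¹ * |x₁ i - x₂ i| ≤ 3 * R₀ * ε := by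
      have e1 : (b₂ ^ 2)⁻¹ * (x₁ i - x₂ i)
          = ((b₁ ^ 2)⁻¹ * x₁ i - (b₂ ^ 2)⁻¹ * x₂ i) - ((b₁ ^ 2)⁻¹ - (b₂ ^ 2)⁻¹) * x₁ i := by
        ring
      calc (b₂ ^ 2)⁻¹ * |x₁ i - x₂ i| = |(b₂ ^ 2)⁻¹ * (x₁ i - x₂ i)| := by
            rw [abs_mul, abs_of_nonneg (by positivity : (0:ℝ) ≤ (b₂ ^ 2)⁻¹)]
        _ ≤ |(b₁ ^ 2)⁻¹ * x₁ i - (b₂ ^ 2)⁻¹ * x₂ i|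
              + |(b₁ ^ 2)⁻¹ - (b₂ ^ 2)⁻¹| * |x₁ i| := by
            rw [e1]; exact (abs_sub _ _).trans (by rw [abs_mul])
        _ ≤ ε * (2 * R₀) + ε * R₀ :=
            add_le_add key (mul_le_mul hb hx₁i (abs_nonneg _) hε)
        _ = 3 * R₀ * ε := by ring
    have hb₂M2 : b₂ ^ 2 ≤ M ^ 2 := by nlinarith
    calc |x₁ i - x₂ i| = b₂ ^ 2 * ((b₂ ^ 2)⁻¹ * |x₁ i - x₂ i|) := by
          field_simp
      _ ≤ M ^ 2 * (3 * R₀ * ε) :=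
          mul_le_mul hb₂M2 hinv (by positivity) (by positivity)
      _ = 3 * R₀ * M ^ 2 * ε := by ring
  constructor
  · -- distance bound
    have hd : dist x₁ x₂ ≤ 2 * (3 * R₀ * M ^ 2 * ε) := by
      rw [EuclideanSpace.dist_eq]
      have hsum : (∑ i : Fin 3, dist (x₁ i) (x₂ i) ^ 2) ≤ (2 * (3 * R₀ * M ^ 2 * ε)) ^ 2 := by
        have hb : ∀ i : Fin 3, dist (x₁ i) (x₂ i) ^ 2 ≤ (3 * R₀ * M ^ 2 * ε) ^ 2 := by
          intro i
          rw [Real.dist_eq]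
          have := hcoord i
          nlinarith [abs_nonneg (x₁ i - x₂ i)]
        calc (∑ i : Fin 3, dist (x₁ i) (x₂ i) ^ 2) ≤ ∑ _i : Fin 3, (3 * R₀ * M ^ 2 * ε) ^ 2 :=
              Finset.sum_le_sum (fun i _ => hb i)
          _ = 3 * (3 * R₀ * M ^ 2 * ε) ^ 2 := by
              rw [Finset.sum_const, Finset.card_univ]; simp
          _ ≤ (2 * (3 * R₀ * M ^ 2 * ε)) ^ 2 := by nlinarith [sq_nonneg (3 * R₀ * M ^ 2 * ε)]
      calc Real.sqrt (∑ i : Fin 3, dist (x₁ i) (x₂ i) ^ 2)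
          ≤ Real.sqrt ((2 * (3 * R₀ * M ^ 2 * ε)) ^ 2) := Real.sqrt_le_sqrt hsum
        _ = 2 * (3 * R₀ * M ^ 2 * ε) := Real.sqrt_sq (by positivity)
    calc dist x₁ x₂ ≤ 2 * (3 * R₀ * M ^ 2 * ε) := hd
      _ = (6 * R₀ * M ^ 2) * ε := by ring
      _ ≤ (6 * R₀ * M ^ 2 + M ^ 4 / (2 * m)) * ε := by
          apply mul_le_mul_of_nonneg_right _ hε
          nlinarith [div_nonneg (by positivity : (0:ℝ) ≤ M ^ 4) (by positivity : (0:ℝ) ≤ 2 * m)]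
  · -- b bound
    have hsq : |b₁ ^ 2 - b₂ ^ 2| ≤ M ^ 4 * ε := by
      have e : b₁ ^ 2 - b₂ ^ 2 = (b₁ ^ 2 * b₂ ^ 2) * ((b₂ ^ 2)⁻¹ - (b₁ ^ 2)⁻¹) := by
        field_simp
      rw [e, abs_mul, abs_of_nonneg (by positivity : (0:ℝ) ≤ b₁ ^ 2 * b₂ ^ 2), abs_sub_comm]
      have hA : b₁ ^ 2 ≤ M ^ 2 := by nlinarith
      have hB : b₂ ^ 2 ≤ M ^ 2 := by nlinarith
      have h1 : b₁ ^ 2 * b₂ ^ 2 ≤ M ^ 4 := by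
        calc b₁ ^ 2 * b₂ ^ 2 ≤ M ^ 2 * M ^ 2 :=
              mul_le_mul hA hB (by positivity) (by positivity)
          _ = M ^ 4 := by ring
      exact mul_le_mul h1 hb (abs_nonneg _) (by positivity)
    have e2 : |b₁ - b₂| * (b₁ + b₂) = |b₁ ^ 2 - b₂ ^ 2| := by
      rw [← abs_of_nonneg (by positivity : (0:ℝ) ≤ b₁ + b₂), ← abs_mul]
      congr 1; ring
    have h3 : |b₁ - b₂| * (2 * m) ≤ M ^ 4 * ε := by
      calc |b₁ - b₂| * (2 * m) ≤ |b₁ - b₂| * (b₁ + b₂) := by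
            apply mul_le_mul_of_nonneg_left (by linarith) (abs_nonneg _)
        _ = |b₁ ^ 2 - b₂ ^ 2| := e2
        _ ≤ M ^ 4 * ε := hsq
    have h4 : |b₁ - b₂| ≤ M ^ 4 / (2 * m) * ε := by
      rw [div_mul_eq_mul_div, le_div_iff₀ (by positivity : (0:ℝ) < 2 * m)]
      linarith
    calc |b₁ - b₂| ≤ M ^ 4 / (2 * m) * ε := h4
      _ ≤ (6 * R₀ * M ^ 2 + M ^ 4 / (2 * m)) * ε := by
          apply mul_le_mul_of_nonneg_right _ hε
          nlinarith
end
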